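/- arXiv:1802.05072 — 9 statements merged into one kernel-verified Lean document; each statement's English description precedes it below -/
import Mathlib

section
/- Fix binary vectors x¹,…,x^k ∈ {0,1}^n. Then the worst-case cost cost(x¹,…,x^k) = sup_{c∈U^Γ} min_{j∈[k]} Σ_{i=1}^n c_i x^j_i equals the optimal value of the dualized problem: inf { Σ_{j=1}^k α_j Σ_{i=1}^n ĉ_i x^j_i + Γ·θ + Σ_{i=1}^n γ_i : α ∈ ℝ^k, θ ∈ ℝ, γ ∈ ℝ^n, α_j ≥ 0 for all j, Σ_{j=1}^k α_j = 1, θ ≥ 0, γ_i ≥ 0 for all i, and θ + γ_i ≥ Σ_{j=1}^k α_j d_i x^j_i for all i }. -/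
/-- The budgeted uncertainty set `U^Γ`. -/
def budgetSet (n : ℕ) (chat d : Fin n → ℝ) (Γ : ℝ) : Set (Fin n → ℝ) :=
  {c | ∃ z : Fin n → ℝ, (∀ i, 0 ≤ z i ∧ z i ≤ 1) ∧ (∑ i, z i) ≤ Γ ∧ ∀ i, c i = chat i + d i * z i}

/-- The worst-case cost of the `k`-tuple `x` over the budgeted uncertainty set. -/
noncomputable def cost (n k : ℕ) (chat d : Fin n → ℝ) (Γ : ℝ) (x : Fin k → Fin n → ℝ) : ℝ :=
  sSup ((fun c => ⨅ j, ∑ i, c i * x j i) '' budgetSet n chat d Γ)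

/-!
With `a j = ∑ i, chat i * x j i` and `b j i = d i * x j i`, the cost is the maximum over the budget
polytope `Z = {z ∈ [0,1]ⁿ | ∑ z ≤ Γ}` of `min_j (a + b z)_j`, and the claim is linear programming
duality for this problem. Weak duality is the estimate `min_j ≤ ∑ α_j (a + b z)_j ≤ α·a + Γθ + ∑ γ`.
For the converse, dualize the budget constraint with a multiplier `θ`: the Lagrangian
`L((α, θ), z) = α·(a + b z) + θ (Γ - ∑ z)` is affine in each argument, so Sion's minimax theorem
gives a saddle point on `(Δ × [0, W]) × [0,1]ⁿ`. Maximizing `L` over the cube yields the dual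
objective with `γ_i = ((αᵀb)_i - θ)⁺`, and for `W ≥ max |b|` the penalty `θ (Γ - ∑ z)` is exact.
-/

open Set Matrix

section

variable {E : Type*} [AddCommMonoid E] [Module ℝ E] {s : Set E} {f : E → ℝ}

theorem convexOn_of_map_add_smul (hs : Convex ℝ s)
    (hf : ∀ x y (a b : ℝ), a + b = 1 → f (a • x + b • y) = a * f x + b * f y) :
    ConvexOn ℝ s f :=
  ⟨hs, fun x _ y _ a b _ _ hab => (hf x y a b hab).le⟩

theorem concaveOn_of_map_add_smul (hs : Convex ℝ s)
    (hf : ∀ x y (a b : ℝ), a + b = 1 → f (a • x + b • y) = a * f x + b * f y) :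
    ConcaveOn ℝ s f :=
  ⟨hs, fun x _ y _ a b _ _ hab => (hf x y a b hab).ge⟩

end

variable {ι κ : Type*} [Fintype ι] [Fintype κ]

def budgetPolytope (Γ : ℝ) : Set (ι → ℝ) := {z | z ∈ Icc 0 1 ∧ ∑ i, z i ≤ Γ}

noncomputable def minAffine (a : κ → ℝ) (b : Matrix κ ι ℝ) (z : ι → ℝ) : ℝ :=
  ⨅ j, (a + b *ᵥ z) j

def dualValues (a : κ → ℝ) (b : Matrix κ ι ℝ) (Γ : ℝ) : Set ℝ :=
  {v | ∃ (α : κ → ℝ) (θ : ℝ) (γ : ι → ℝ),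
    (∀ j, 0 ≤ α j) ∧ (∑ j, α j) = 1 ∧ 0 ≤ θ ∧ (∀ i, 0 ≤ γ i) ∧
    (∀ i, θ + γ i ≥ (α ᵥ* b) i) ∧ v = α ⬝ᵥ a + Γ * θ + ∑ i, γ i}

def lagrangian (a : κ → ℝ) (b : Matrix κ ι ℝ) (Γ : ℝ) (p : (κ → ℝ) × ℝ) (z : ι → ℝ) : ℝ :=
  p.1 ⬝ᵥ (a + b *ᵥ z) + p.2 * (Γ - ∑ i, z i)

variable {a : κ → ℝ} {b : Matrix κ ι ℝ} {Γ : ℝ}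

theorem ciInf_le_dotProduct_of_mem_stdSimplex {v α : κ → ℝ} (hα : α ∈ stdSimplex ℝ κ) :
    ⨅ j, v j ≤ α ⬝ᵥ v := by
  calc ⨅ j, v j = ∑ j, α j * ⨅ j, v j := by rw [← Finset.sum_mul, hα.2, one_mul]
    _ ≤ α ⬝ᵥ v := Finset.sum_le_sum fun j _ =>
        mul_le_mul_of_nonneg_left (ciInf_le (Finite.bddBelow_range v) j) (hα.1 j)

theorem minAffine_le_of_mem_dualValues {z : ι → ℝ} (hz : z ∈ budgetPolytope Γ) {v : ℝ}
    (hv : v ∈ dualValues a b Γ) : minAffine a b z ≤ v := by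
  obtain ⟨⟨hz0, hz1⟩, hzΓ⟩ := hz
  obtain ⟨α, θ, γ, hα0, hα1, hθ, hγ, hfeas, rfl⟩ := hv
  have hpen : (α ᵥ* b) ⬝ᵥ z ≤ Γ * θ + ∑ i, γ i := calc
    (α ᵥ* b) ⬝ᵥ z ≤ ∑ i, (θ + γ i) * z i :=
        Finset.sum_le_sum fun i _ => mul_le_mul_of_nonneg_right (hfeas i) (hz0 i)
    _ = θ * ∑ i, z i + ∑ i, γ i * z i := by
        rw [Finset.mul_sum, ← Finset.sum_add_distrib]; simp only [add_mul]
    _ ≤ Γ * θ + ∑ i, γ i := by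
        gcongr ?_ + ?_
        · rw [mul_comm]; exact mul_le_mul_of_nonneg_right hzΓ hθ
        · exact Finset.sum_le_sum fun i _ => mul_le_of_le_one_right (hγ i) (hz1 i)
  calc minAffine a b z ≤ α ⬝ᵥ (a + b *ᵥ z) :=
        ciInf_le_dotProduct_of_mem_stdSimplex ⟨hα0, hα1⟩
    _ = α ⬝ᵥ a + (α ᵥ* b) ⬝ᵥ z := by rw [dotProduct_add, dotProduct_mulVec]
    _ ≤ _ := by linarith

theorem lagrangian_eq (α : κ → ℝ) (θ : ℝ) (z : ι → ℝ) :
    lagrangian a b Γ (α, θ) z = α ⬝ᵥ a + Γ * θ + ∑ i, ((α ᵥ* b) i - θ) * z i := by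
  rw [lagrangian, dotProduct_add, dotProduct_mulVec]
  simp only [dotProduct, sub_mul, Finset.sum_sub_distrib, ← Finset.mul_sum]
  ring

theorem exists_mem_Icc_sum_mul_eq_sum_posPart (c : ι → ℝ) :
    ∃ z ∈ Icc (0 : ι → ℝ) 1, ∑ i, c i * z i = ∑ i, (c i)⁺ := by
  classical
  refine ⟨fun i => if 0 ≤ c i then 1 else 0, ⟨fun i => ?_, fun i => ?_⟩,
    Finset.sum_congr rfl fun i _ => ?_⟩ <;> by_cases h : 0 ≤ c i <;> simp [h, le_of_not_ge]

theorem lagrangian_smul_add_smul_left (p q : (κ → ℝ) × ℝ) (z : ι → ℝ) (s t : ℝ) :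
    lagrangian a b Γ (s • p + t • q) z = s * lagrangian a b Γ p z + t * lagrangian a b Γ q z := by
  simp only [lagrangian, Prod.fst_add, Prod.snd_add, Prod.smul_fst, Prod.smul_snd, add_dotProduct,
    smul_dotProduct, smul_eq_mul]
  ring

theorem lagrangian_smul_add_smul_right (p : (κ → ℝ) × ℝ) (z w : ι → ℝ) {s t : ℝ}
    (hst : s + t = 1) :
    lagrangian a b Γ p (s • z + t • w) = s * lagrangian a b Γ p z + t * lagrangian a b Γ p w := by
  obtain ⟨α, θ⟩ := p
  simp only [lagrangian_eq, Pi.add_apply, Pi.smul_apply, smul_eq_mul, mul_add,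
    Finset.sum_add_distrib]
  simp only [mul_left_comm _ s, mul_left_comm _ t, ← Finset.mul_sum]
  linear_combination -(α ⬝ᵥ a + Γ * θ) * hst

theorem continuous_lagrangian_left (z : ι → ℝ) : Continuous fun p => lagrangian a b Γ p z := by
  unfold lagrangian dotProduct; fun_prop

theorem continuous_lagrangian_right (p : (κ → ℝ) × ℝ) : Continuous (lagrangian a b Γ p) := by
  unfold lagrangian dotProduct mulVec; fun_prop

theorem exists_isSaddlePointOn_lagrangian [Nonempty κ] {W : ℝ} (hW : 0 ≤ W) :
    ∃ p ∈ stdSimplex ℝ κ ×ˢ Icc 0 W, ∃ z ∈ Icc (0 : ι → ℝ) 1,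
      IsSaddlePointOn (stdSimplex ℝ κ ×ˢ Icc 0 W) (Icc 0 1) (lagrangian a b Γ) p z := by
  classical
  have hX := (convex_stdSimplex ℝ κ).prod (convex_Icc (𝕜 := ℝ) 0 W)
  have hY := convex_Icc (𝕜 := ℝ) (0 : ι → ℝ) 1
  exact Sion.exists_isSaddlePointOn
    ⟨(Pi.single (Classical.arbitrary κ) 1, 0), single_mem_stdSimplex ℝ _, le_rfl, hW⟩ hX
    ((isCompact_stdSimplex ℝ κ).prod isCompact_Icc)
    (fun z _ => (continuous_lagrangian_left z).lowerSemicontinuous.lowerSemicontinuousOn _)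
    (fun z _ => (convexOn_of_map_add_smul hX fun p q s t _ =>
      lagrangian_smul_add_smul_left p q z s t).quasiconvexOn)
    hY ⟨0, le_rfl, zero_le_one⟩ isCompact_Icc
    (fun p _ => (continuous_lagrangian_right p).upperSemicontinuous.upperSemicontinuousOn _)
    (fun p _ => (concaveOn_of_map_add_smul hY fun z w s t hst =>
      lagrangian_smul_add_smul_right p z w hst).quasiconcaveOn)

/-- Exact penalty: scaling an overshooting `z` onto `∑ z = Γ` changes each `(b *ᵥ z) j` by at most
`∑ |b|` times the excess. -/
theorem exists_mem_budgetPolytope_mulVec_add_mul_le (hΓ : 0 ≤ Γ) {z : ι → ℝ} (hz : z ∈ Icc 0 1) :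
    ∃ θ ∈ Icc 0 (∑ j, ∑ i, |b j i|), ∃ z' ∈ budgetPolytope Γ,
      ∀ j, (b *ᵥ z) j + θ * (Γ - ∑ i, z i) ≤ (b *ᵥ z') j := by
  set W := ∑ j, ∑ i, |b j i|
  have hW : 0 ≤ W := by positivity
  by_cases hzΓ : ∑ i, z i ≤ Γ
  · exact ⟨0, ⟨le_rfl, hW⟩, z, ⟨hz, hzΓ⟩, fun j => by simp⟩
  set s := ∑ i, z i
  have hs : 0 < s := by linarith
  have ht0 : 0 ≤ Γ / s := by positivity
  have ht1 : Γ / s ≤ 1 := (div_le_one hs).2 (by linarith)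
  have hbW : ∀ j i, b j i ≤ W := fun j i => calc
    b j i ≤ |b j i| := le_abs_self _
    _ ≤ ∑ i, |b j i| := Finset.single_le_sum (fun i _ => abs_nonneg (b j i)) (Finset.mem_univ i)
    _ ≤ W := Finset.single_le_sum (f := fun j => ∑ i, |b j i|) (fun j _ => by positivity)
        (Finset.mem_univ j)
  refine ⟨W, ⟨hW, le_rfl⟩, (Γ / s) • z, ⟨⟨fun i => mul_nonneg ht0 (hz.1 i),
    fun i => (mul_le_of_le_one_left (hz.1 i) ht1).trans (hz.2 i)⟩, ?_⟩, fun j => ?_⟩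
  · simp only [Pi.smul_apply, smul_eq_mul, ← Finset.mul_sum]
    rw [div_mul_cancel₀ _ hs.ne']
  · have hbz : (b *ᵥ z) j ≤ W * s := by
      rw [Finset.mul_sum]
      exact Finset.sum_le_sum fun i _ => mul_le_mul_of_nonneg_right (hbW j i) (hz.1 i)
    have hscaled : (1 - Γ / s) * (b *ᵥ z) j ≤ (1 - Γ / s) * (W * s) :=
      mul_le_mul_of_nonneg_left hbz (by linarith)
    have hts : Γ / s * s = Γ := div_mul_cancel₀ _ hs.ne'
    rw [mulVec_smul, Pi.smul_apply, smul_eq_mul]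
    nlinarith

theorem exists_mem_dualValues_le_minAffine [Nonempty κ] (hΓ : 0 ≤ Γ) :
    ∃ v ∈ dualValues a b Γ, ∃ z ∈ budgetPolytope Γ, v ≤ minAffine a b z := by
  classical
  obtain ⟨⟨α, θ⟩, ⟨hα, hθ⟩, z, hz, hsaddle⟩ :=
    exists_isSaddlePointOn_lagrangian (a := a) (b := b) (Γ := Γ) (W := ∑ j, ∑ i, |b j i|)
      (by positivity)
  obtain ⟨θ', hθ', z', hz', hpen⟩ := exists_mem_budgetPolytope_mulVec_add_mul_le (b := b) hΓ hz
  obtain ⟨zθ, hzθ, hzθsum⟩ := exists_mem_Icc_sum_mul_eq_sum_posPart fun i => (α ᵥ* b) i - θ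
  refine ⟨α ⬝ᵥ a + Γ * θ + ∑ i, ((α ᵥ* b) i - θ)⁺,
    ⟨α, θ, _, hα.1, hα.2, hθ.1, fun i => posPart_nonneg _,
      fun i => by linarith [le_posPart ((α ᵥ* b) i - θ)], rfl⟩, z', hz', le_ciInf fun j => ?_⟩
  calc _ = lagrangian a b Γ (α, θ) zθ := by rw [lagrangian_eq, hzθsum]
    _ ≤ lagrangian a b Γ (Pi.single j 1, θ') z :=
        hsaddle _ ⟨single_mem_stdSimplex ℝ j, hθ'⟩ _ hzθ
    _ = a j + ((b *ᵥ z) j + θ' * (Γ - ∑ i, z i)) := by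
        rw [lagrangian, single_dotProduct, one_mul, Pi.add_apply, add_assoc]
    _ ≤ (a + b *ᵥ z') j := add_le_add_right (hpen j) _

theorem sSup_minAffine_image_eq_sInf_dualValues [Nonempty κ] (hΓ : 0 ≤ Γ) :
    sSup (minAffine a b '' budgetPolytope Γ) = sInf (dualValues a b Γ) := by
  obtain ⟨v, hv, z, hz, hvz⟩ := exists_mem_dualValues_le_minAffine (a := a) (b := b) hΓ
  apply le_antisymm
  · refine csSup_le ⟨_, mem_image_of_mem _ hz⟩ ?_
    rintro _ ⟨z', hz', rfl⟩
    exact le_csInf ⟨v, hv⟩ fun v' hv' => minAffine_le_of_mem_dualValues hz' hv'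
  · calc sInf (dualValues a b Γ) ≤ v :=
          csInf_le ⟨minAffine a b z, fun v' hv' => minAffine_le_of_mem_dualValues hz hv'⟩ hv
      _ ≤ minAffine a b z := hvz
      _ ≤ _ := le_csSup
          ⟨v, by rintro _ ⟨z', hz', rfl⟩; exact minAffine_le_of_mem_dualValues hz' hv⟩
          (mem_image_of_mem _ hz)

theorem budgetSet_eq_image_budgetPolytope (n : ℕ) (chat d : Fin n → ℝ) (Γ : ℝ) :
    budgetSet n chat d Γ = (fun z => chat + d * z) '' budgetPolytope Γ := by
  ext c
  constructor
  · rintro ⟨z, hz, hzΓ, hc⟩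
    exact ⟨z, ⟨⟨fun i => (hz i).1, fun i => (hz i).2⟩, hzΓ⟩, funext fun i => (hc i).symm⟩
  · rintro ⟨z, ⟨hz, hzΓ⟩, rfl⟩
    exact ⟨z, fun i => ⟨hz.1 i, hz.2 i⟩, hzΓ, fun i => rfl⟩

theorem cost_eq_sSup_minAffine_image (n k : ℕ) (chat d : Fin n → ℝ) (Γ : ℝ)
    (x : Fin k → Fin n → ℝ) :
    cost n k chat d Γ x =
      sSup (minAffine (fun j => ∑ i, chat i * x j i) (fun j i => d i * x j i) ''
        budgetPolytope Γ) := by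
  rw [cost, budgetSet_eq_image_budgetPolytope, image_image]
  congr 2
  funext z
  refine congrArg iInf (funext fun j => ?_)
  simp only [Pi.add_apply, Pi.mul_apply, mulVec, dotProduct, add_mul, Finset.sum_add_distrib]
  congr! 2 with i
  ring

theorem stmt0_general (n k : ℕ) (hk : 1 ≤ k)
    (chat d : Fin n → ℝ) (Γ : ℝ) (hΓ : 0 < Γ)
    (x : Fin k → Fin n → ℝ) :
    cost n k chat d Γ x =
      sInf {v : ℝ | ∃ (α : Fin k → ℝ) (θ : ℝ) (γ : Fin n → ℝ),
        (∀ j, 0 ≤ α j) ∧ (∑ j, α j) = 1 ∧ 0 ≤ θ ∧ (∀ i, 0 ≤ γ i) ∧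
        (∀ i, θ + γ i ≥ ∑ j, α j * (d i * x j i)) ∧
        v = (∑ j, α j * ∑ i, chat i * x j i) + Γ * θ + ∑ i, γ i} := by
  have : Nonempty (Fin k) := ⟨⟨0, hk⟩⟩
  rw [cost_eq_sSup_minAffine_image]
  exact sSup_minAffine_image_eq_sInf_dualValues hΓ.le

/-- the worst-case cost equals the optimal value of the dualized problem. -/
theorem stmt0 (n k : ℕ) (hn : 1 ≤ n) (hk : 1 ≤ k)
    (chat d : Fin n → ℝ) (hd : ∀ i, 0 ≤ d i) (Γ : ℝ) (hΓ : 0 < Γ)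
    (x : Fin k → Fin n → ℝ) (hx : ∀ j i, x j i = 0 ∨ x j i = 1) :
    cost n k chat d Γ x =
      sInf {v : ℝ | ∃ (α : Fin k → ℝ) (θ : ℝ) (γ : Fin n → ℝ),
        (∀ j, 0 ≤ α j) ∧ (∑ j, α j) = 1 ∧ 0 ≤ θ ∧ (∀ i, 0 ≤ γ i) ∧
        (∀ i, θ + γ i ≥ ∑ j, α j * (d i * x j i)) ∧
        v = (∑ j, α j * ∑ i, chat i * x j i) + Γ * θ + ∑ i, γ i} :=
  stmt0_general n k hk chat d Γ hΓ x
end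

section
/- Let X ⊆ {0,1}^n be finite and nonempty. Then there exist α ∈ ℝ^k with α_j ≥ 0 for all j and Σ_{j=1}^k α_j = 1, and θ ≥ 0, such that min_{(x¹,…,x^k)∈X^k} cost(x¹,…,x^k) = Γ·θ + min_{(x¹,…,x^k)∈X^k} Σ_{i=1}^n f_i(x¹_i,…,x^k_i), where f_i(x¹_i,…,x^k_i) = Σ_{j=1}^k α_j ĉ_i x^j_i + max(0, Σ_{j=1}^k α_j d_i x^j_i − θ). In other words, the min-max-min problem is solved exactly by one subproblem of the form min_{x∈X^k} Σ_i f_i for suitably fixed α and θ. -/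
lemma knapsack_strong (n : ℕ) (Γ : ℝ) (hΓ : 0 < Γ) (w : Fin n → ℝ) (hw : ∀ i, 0 ≤ w i) :
    ∃ θ : ℝ, 0 ≤ θ ∧ ∃ z : Fin n → ℝ, (∀ i, 0 ≤ z i ∧ z i ≤ 1) ∧ (∑ i, z i) ≤ Γ ∧
      Γ * θ + ∑ i, max 0 (w i - θ) ≤ ∑ i, w i * z i := by
  by_cases hcase : (n : ℝ) ≤ Γ
  · refine ⟨0, le_refl _, fun _ => 1, fun i => ⟨zero_le_one, le_refl _⟩, by simpa using hcase, ?_⟩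
    have : ∀ i : Fin n, max 0 (w i - 0) = w i * 1 := by
      intro i; simp [max_eq_right (hw i)]
    simp only [this]
    simp
  · push_neg at hcase
    set m : ℕ := ⌊Γ⌋₊ with hm
    have hmle : (m : ℝ) ≤ Γ := Nat.floor_le hΓ.le
    have hlt1 : Γ < (m : ℝ) + 1 := Nat.lt_floor_add_one Γ
    have hmn : m < n := by
      have : (m : ℝ) < (n : ℝ) := lt_of_le_of_lt hmle hcase
      exact_mod_cast this
    set τ : Equiv.Perm (Fin n) := Fin.revPerm.trans (Tuple.sort w) with hτ
    have hanti : ∀ p q : Fin n, p ≤ q → w (τ q) ≤ w (τ p) := by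
      intro p q hpq
      have := Tuple.monotone_sort w (Fin.rev_le_rev.2 hpq)
      simpa [hτ] using this
    set mIdx : Fin n := ⟨m, hmn⟩ with hmIdx
    set θ : ℝ := w (τ mIdx) with hθ
    set g : Fin n → ℝ := fun p => if (p : ℕ) < m then 1 else if (p : ℕ) = m then Γ - m else 0
      with hg
    have hgbound : ∀ p, 0 ≤ g p ∧ g p ≤ 1 := by
      intro p
      simp only [hg]
      split_ifs
      · exact ⟨zero_le_one, le_refl _⟩
      · constructor <;> linarith
      · exact ⟨le_refl _, zero_le_one⟩
    have hgsum : ∑ p, g p = Γ := by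
      have h1 : ∀ p : Fin n, g p = (if (p:ℕ) < m then (1:ℝ) else 0)
          + (if (p:ℕ) = m then Γ - m else 0) := by
        intro p
        simp only [hg]
        rcases lt_trichotomy (p:ℕ) m with h | h | h
        · simp [h, Nat.ne_of_lt h]
        · simp [h]
        · simp [Nat.lt_asymm h, Nat.ne_of_gt h]
      rw [Finset.sum_congr rfl fun p _ => h1 p, Finset.sum_add_distrib]
      have h2 : ∑ p : Fin n, (if (p:ℕ) < m then (1:ℝ) else 0) = m := by
        rw [Fin.sum_univ_eq_sum_range (fun i => if i < m then (1:ℝ) else 0)]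
        simp only [← Finset.mem_range]
        rw [Finset.sum_ite_mem]
        rw [Finset.inter_eq_right.2 (Finset.range_subset_range.2 hmn.le)]
        simp
      have h3 : ∑ p : Fin n, (if (p:ℕ) = m then Γ - (m:ℝ) else 0) = Γ - m := by
        rw [Fin.sum_univ_eq_sum_range (fun i => if i = m then Γ - (m:ℝ) else 0)]
        rw [Finset.sum_ite_eq' (Finset.range n) m (fun _ => Γ - (m:ℝ))]
        simp [hmn]
      rw [h2, h3]; ring
    set z : Fin n → ℝ := fun i => g (τ.symm i) with hz
    have hzg : ∀ p, z (τ p) = g p := by intro p; simp [hz]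
    have hzsum : ∑ i, z i = Γ := by
      rw [← Equiv.sum_comp τ z]
      simp only [hzg]; exact hgsum
    have hmax : ∀ p : Fin n, max 0 (w (τ p) - θ) = (w (τ p) - θ) * g p := by
      intro p
      rcases lt_trichotomy (p:ℕ) m with h | h | h
      · have hple : p ≤ mIdx := le_of_lt (by exact_mod_cast h)
        have : θ ≤ w (τ p) := hanti p mIdx hple
        rw [max_eq_right (by linarith)]
        simp [hg, h]
      · have : p = mIdx := Fin.ext (by simpa using h)
        rw [this]
        simp [hθ]
      · have hple : mIdx ≤ p := le_of_lt (by exact_mod_cast h)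
        have hle : w (τ p) ≤ θ := hanti mIdx p hple
        rw [max_eq_left (by linarith)]
        simp [hg, Nat.lt_asymm h, Nat.ne_of_gt h]
    refine ⟨θ, hw _, z, fun i => by simpa [hz] using hgbound (τ.symm i), le_of_eq hzsum, ?_⟩
    have e1 : ∑ i, max 0 (w i - θ) = ∑ p, max 0 (w (τ p) - θ) :=
      (Equiv.sum_comp τ (fun i => max 0 (w i - θ))).symm
    have e2 : ∑ i, w i * z i = ∑ p, w (τ p) * g p := by
      rw [← Equiv.sum_comp τ (fun i => w i * z i)]
      exact Finset.sum_congr rfl fun p _ => by rw [hzg]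
    rw [e1, e2]
    have e3 : ∑ p, max 0 (w (τ p) - θ) = ∑ p, (w (τ p) * g p - θ * g p) := by
      refine Finset.sum_congr rfl fun p _ => ?_
      rw [hmax p]; ring
    rw [e3, Finset.sum_sub_distrib, ← Finset.mul_sum, hgsum]
    linarith


lemma simplex_sep {k : ℕ} (hk : 1 ≤ k) (K : Set (Fin k → ℝ)) (hKconv : Convex ℝ K)
    (hKne : K.Nonempty) (v : ℝ) (hv : ∀ y ∈ K, ∃ j, y j ≤ v) :
    ∃ α : Fin k → ℝ, (∀ j, 0 ≤ α j) ∧ (∑ j, α j) = 1 ∧ ∀ y ∈ K, ∑ j, α j * y j ≤ v := by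
  haveI : NeZero k := ⟨by omega⟩
  set A : Set (Fin k → ℝ) := {y | ∀ j, v < y j} with hA
  have hAopen : IsOpen A := by
    have : A = ⋂ j, {y : Fin k → ℝ | v < y j} := by
      ext y; simp [hA]
    rw [this]
    exact isOpen_iInter_of_finite fun j => isOpen_lt continuous_const (continuous_apply j)
  have hAconv : Convex ℝ A := by
    intro y₁ h₁ y₂ h₂ a b ha hb hab
    intro j
    simp only [Pi.add_apply, Pi.smul_apply, smul_eq_mul]
    have e : a * v + b * v = v := by rw [← add_mul, hab, one_mul]
    rcases eq_or_lt_of_le ha with h | h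
    · have hb1 : b = 1 := by linarith
      simp [← h, hb1]; exact h₂ j
    · have t1 := mul_lt_mul_of_pos_left (h₁ j) h
      have t2 := mul_le_mul_of_nonneg_left (h₂ j).le hb
      linarith
  have hdisj : Disjoint A K := by
    rw [Set.disjoint_left]
    intro y hyA hyK
    obtain ⟨j, hj⟩ := hv y hyK
    exact absurd (hyA j) (not_lt.2 hj)
  obtain ⟨f, u, hfA, hfK⟩ := geometric_hahn_banach_open hAconv hAopen hKconv hdisj
  set β : Fin k → ℝ := fun j => -(f (Pi.single j (1:ℝ))) with hβ
  have hsingle : ∀ (j : Fin k) (c : ℝ),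
      (Pi.single j c : Fin k → ℝ) = c • (Pi.single j (1:ℝ) : Fin k → ℝ) := by
    intro j c; funext l
    rcases eq_or_ne l j with rfl | hne
    · simp
    · simp [Pi.single_eq_of_ne hne]
  have hfy : ∀ y : Fin k → ℝ, f y = -∑ j, y j * β j := by
    intro y
    have hy : y = ∑ j, Pi.single j (y j) := (Finset.univ_sum_single y).symm
    conv_lhs => rw [hy]
    rw [map_sum, ← Finset.sum_neg_distrib]
    refine Finset.sum_congr rfl fun j _ => ?_
    rw [hsingle j (y j), map_smul]
    simp [hβ]
  have hconst : ∀ ε : ℝ, 0 < ε → (fun _ : Fin k => v + ε) ∈ A := by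
    intro ε hε j; simpa using hε
  have hβnonneg : ∀ j, 0 ≤ β j := by
    intro j
    by_contra h
    push_neg at h
    have hs : 0 < f (Pi.single j (1:ℝ)) := by
      have : -β j > 0 := by linarith
      simpa [hβ] using this
    set t : ℝ := max 0 ((u - f (fun _ => v + 1)) / f (Pi.single j (1:ℝ))) with ht
    have htnn : 0 ≤ t := le_max_left _ _
    have hmem : ((fun _ : Fin k => v + 1) + t • (Pi.single j (1:ℝ) : Fin k → ℝ)) ∈ A := by
      intro l
      simp only [Pi.add_apply, Pi.smul_apply, smul_eq_mul]
      rcases eq_or_ne l j with rfl | hne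
      · simp only [Pi.single_eq_same]; linarith
      · simp only [Pi.single_eq_of_ne hne, mul_zero]; linarith
    have hlt := hfA _ hmem
    rw [map_add, map_smul, smul_eq_mul] at hlt
    have hge : (u - f (fun _ => v + 1)) / f (Pi.single j (1:ℝ)) ≤ t := le_max_right _ _
    have hge' : u - f (fun _ => v + 1) ≤ t * f (Pi.single j (1:ℝ)) := (div_le_iff₀ hs).1 hge
    linarith
  set S : ℝ := ∑ j, β j with hS
  have hSnonneg : 0 ≤ S := Finset.sum_nonneg fun j _ => hβnonneg j
  obtain ⟨y₀, hy₀⟩ := hKne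
  have hKineq : ∀ y ∈ K, ∑ j, β j * y j ≤ -u := by
    intro y hy
    have h1 := hfK y hy
    rw [hfy y] at h1
    have h2 : ∑ j, y j * β j ≤ -u := by linarith
    calc ∑ j, β j * y j = ∑ j, y j * β j := Finset.sum_congr rfl fun j _ => mul_comm _ _
    _ ≤ -u := h2
  have hAineq : ∀ ε : ℝ, 0 < ε → -((v + ε) * S) < u := by
    intro ε hε
    have h1 := hfA _ (hconst ε hε)
    rw [hfy] at h1
    have heq : ∑ j, (v + ε) * β j = (v + ε) * S := by rw [← Finset.mul_sum]
    calc -((v+ε) * S) = -∑ j, (v+ε) * β j := by rw [heq]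
    _ < u := h1
  have hSpos : 0 < S := by
    rcases eq_or_lt_of_le hSnonneg with h | h
    · exfalso
      have hβ0 : ∀ j, β j = 0 := by
        intro j
        exact (Finset.sum_eq_zero_iff_of_nonneg (fun j _ => hβnonneg j)).1 h.symm j
          (Finset.mem_univ j)
      have hsum0 : ∑ j, β j * y₀ j = 0 := Finset.sum_eq_zero fun j _ => by rw [hβ0 j]; ring
      have h2 := hKineq y₀ hy₀
      rw [hsum0] at h2
      have h1 := hAineq 1 one_pos
      rw [← h] at h1
      simp at h1
      linarith
    · exact h
  have hvS : -u ≤ v * S := by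
    by_contra hcon
    push_neg at hcon
    set ε : ℝ := (-u - v * S) / S with hε
    have hεpos : 0 < ε := div_pos (by linarith) hSpos
    have hεS : ε * S = -u - v * S := div_mul_cancel₀ _ hSpos.ne'
    have h1 := hAineq ε hεpos
    have expand : -((v + ε) * S) = -(v * S) - ε * S := by ring
    linarith
  refine ⟨fun j => β j / S, fun j => div_nonneg (hβnonneg j) hSpos.le, ?_, ?_⟩
  · rw [← Finset.sum_div, ← hS]
    field_simp
  · intro y hy
    have h1 : ∑ j, β j / S * y j = (∑ j, β j * y j) / S := by
      rw [Finset.sum_div]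
      exact Finset.sum_congr rfl fun j _ => by ring
    rw [h1, div_le_iff₀ hSpos]
    calc ∑ j, β j * y j ≤ -u := hKineq y hy
    _ ≤ v * S := hvS

/-- the min-max-min problem is solved exactly by one subproblem
`min_{x ∈ X^k} Σ_i f_i` for suitably fixed `α` and `θ`. -/
theorem stmt1 (n k : ℕ) (hn : 1 ≤ n) (hk : 1 ≤ k)
    (chat d : Fin n → ℝ) (hd : ∀ i, 0 ≤ d i) (Γ : ℝ) (hΓ : 0 < Γ)
    (X : Finset (Fin n → ℝ)) (hXne : X.Nonempty)
    (hX01 : ∀ x ∈ X, ∀ i, x i = 0 ∨ x i = 1) :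
    ∃ (α : Fin k → ℝ) (θ : ℝ), (∀ j, 0 ≤ α j) ∧ (∑ j, α j) = 1 ∧ 0 ≤ θ ∧
      sInf {v : ℝ | ∃ x : Fin k → Fin n → ℝ, (∀ j, x j ∈ X) ∧ v = cost n k chat d Γ x} =
        Γ * θ + sInf {v : ℝ | ∃ x : Fin k → Fin n → ℝ, (∀ j, x j ∈ X) ∧
          v = ∑ i, ((∑ j, α j * (chat i * x j i)) +
                max 0 ((∑ j, α j * (d i * x j i)) - θ))} := by
  haveI : NeZero k := ⟨by omega⟩
  set U : Set (Fin n → ℝ) := budgetSet n chat d Γ with hU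
  have hUne : U.Nonempty := by
    exact ⟨chat, fun _ => 0, fun i => ⟨le_refl _, zero_le_one⟩, by simpa using hΓ.le, fun i => by ring⟩
  -- basic facts about members of X
  have hx01 : ∀ x, x ∈ X → ∀ i : Fin n, 0 ≤ x i ∧ x i ≤ 1 := by
    intro x hx i
    rcases hX01 x hx i with h | h <;> rw [h] <;> norm_num
  -- bound on scalar products
  set B : ℝ := ∑ i, (|chat i| + d i) with hB
  have hub : ∀ (x : Fin k → Fin n → ℝ), (∀ j, x j ∈ X) → ∀ c ∈ U, ∀ j,
      ∑ i, c i * x j i ≤ B := by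
    intro x hx c hc j
    obtain ⟨z, hzb, hzΓ, hcz⟩ := hc
    refine Finset.sum_le_sum fun i _ => ?_
    rw [hcz i]
    obtain ⟨hx0, hx1⟩ := hx01 _ (hx j) i
    have h1 : chat i ≤ |chat i| := le_abs_self _
    have h2 : d i * z i ≤ d i := by
      nlinarith [(hzb i).2, hd i]
    have h3 : 0 ≤ d i * z i := mul_nonneg (hd i) (hzb i).1
    have habs : 0 ≤ |chat i| := abs_nonneg _
    nlinarith
  have hbddR : ∀ (c : Fin n → ℝ) (x : Fin k → Fin n → ℝ),
      BddBelow (Set.range fun j => ∑ i, c i * x j i) :=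
    fun c x => (Set.finite_range _).bddBelow
  have hImne : ∀ x : Fin k → Fin n → ℝ,
      ((fun c => ⨅ j, ∑ i, c i * x j i) '' U).Nonempty := fun x => hUne.image _
  have hImbdd : ∀ (x : Fin k → Fin n → ℝ), (∀ j, x j ∈ X) →
      BddAbove ((fun c => ⨅ j, ∑ i, c i * x j i) '' U) := by
    intro x hx
    refine ⟨B, ?_⟩
    rintro y ⟨c, hc, rfl⟩
    exact le_trans (ciInf_le (hbddR c x) ⟨0, hk⟩) (hub x hx c hc _)
  -- the feasible tuple set
  set T : Set (Fin k → Fin n → ℝ) := {x | ∀ j, x j ∈ X} with hT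
  have hTfin : T.Finite := by
    have h := Set.Finite.pi (fun _ : Fin k => X.finite_toSet)
    exact h.subset fun x hx j _ => hx j
  obtain ⟨x₀, hx₀⟩ := hXne
  have hTne : T.Nonempty := ⟨fun _ => x₀, fun _ => hx₀⟩
  -- S1
  set S1 : Set ℝ := {v : ℝ | ∃ x : Fin k → Fin n → ℝ, (∀ j, x j ∈ X) ∧
    v = cost n k chat d Γ x} with hS1
  have hS1eq : S1 = (fun x => cost n k chat d Γ x) '' T := by
    ext v
    constructor
    · rintro ⟨x, hx, rfl⟩; exact ⟨x, hx, rfl⟩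
    · rintro ⟨x, hx, rfl⟩; exact ⟨x, hx, rfl⟩
  have hS1fin : S1.Finite := hS1eq ▸ hTfin.image _
  have hS1ne : S1.Nonempty := ⟨_, ⟨_, hTne.choose_spec, rfl⟩⟩
  have hS1mem := hS1ne.csInf_mem hS1fin
  obtain ⟨xs, hxsX, hxscost⟩ := hS1mem
  -- v* and its realization
  set v := sInf S1 with hv
  -- the image K for separation
  set K : Set (Fin k → ℝ) := (fun c => (fun j => ∑ i, c i * xs j i)) '' U with hK
  have hKne : K.Nonempty := hUne.image _
  have hKconv : Convex ℝ K := by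
    rintro y₁ ⟨c₁, ⟨z₁, hz₁b, hz₁Γ, hc₁⟩, rfl⟩ y₂ ⟨c₂, ⟨z₂, hz₂b, hz₂Γ, hc₂⟩, rfl⟩ a b ha hb hab
    refine ⟨a • c₁ + b • c₂, ⟨a • z₁ + b • z₂, ?_, ?_, ?_⟩, ?_⟩
    · intro i
      simp only [Pi.add_apply, Pi.smul_apply, smul_eq_mul]
      constructor
      · have := (hz₁b i).1; have := (hz₂b i).1
        nlinarith
      · nlinarith [(hz₁b i).2, (hz₂b i).2]
    · simp only [Pi.add_apply, Pi.smul_apply, smul_eq_mul, Finset.sum_add_distrib,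
        ← Finset.mul_sum]
      nlinarith
    · intro i
      simp only [Pi.add_apply, Pi.smul_apply, smul_eq_mul]
      rw [hc₁ i, hc₂ i]; linear_combination (chat i) * hab
    · funext j
      simp only [Pi.add_apply, Pi.smul_apply, smul_eq_mul, Finset.sum_add_distrib,
        ← Finset.mul_sum]
      rw [Finset.mul_sum, Finset.mul_sum, ← Finset.sum_add_distrib]
      refine Finset.sum_congr rfl fun i _ => by ring
  have hvK : ∀ y ∈ K, ∃ j, y j ≤ v := by
    rintro y ⟨c, hc, rfl⟩
    obtain ⟨jm, hjm⟩ := Finite.exists_min (fun j => ∑ i, c i * xs j i)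
    refine ⟨jm, ?_⟩
    have h1 : ∑ i, c i * xs jm i ≤ ⨅ j, ∑ i, c i * xs j i := le_ciInf hjm
    have h2 : (⨅ j, ∑ i, c i * xs j i) ≤ v := by
      rw [hxscost]
      exact le_csSup (hImbdd xs hxsX) ⟨c, hc, rfl⟩
    exact le_trans h1 h2
  obtain ⟨α, hα0, hα1, hαle⟩ := simplex_sep hk K hKconv hKne v hvK
  -- the weights
  set w : Fin n → ℝ := fun i => ∑ j, α j * (d i * xs j i) with hw
  have hwnn : ∀ i, 0 ≤ w i := by
    intro i
    refine Finset.sum_nonneg fun j _ => ?_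
    exact mul_nonneg (hα0 j) (mul_nonneg (hd i) (hx01 _ (hxsX j) i).1)
  obtain ⟨θ, hθ0, z, hzb, hzΓ, hkey⟩ := knapsack_strong n Γ hΓ w hwnn
  -- the algebraic identity
  have halg : ∀ (x : Fin k → Fin n → ℝ) (zz : Fin n → ℝ),
      ∑ j, α j * (∑ i, (chat i + d i * zz i) * x j i) =
        (∑ i, ∑ j, α j * (chat i * x j i)) + ∑ i, (∑ j, α j * (d i * x j i)) * zz i := by
    intro x zz
    have e1 : ∀ j, α j * (∑ i, (chat i + d i * zz i) * x j i) =
        ∑ i, (α j * (chat i * x j i) + (α j * (d i * x j i)) * zz i) := by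
      intro j
      rw [Finset.mul_sum]
      exact Finset.sum_congr rfl fun i _ => by ring
    rw [Finset.sum_congr rfl fun j _ => e1 j, Finset.sum_comm]
    rw [Finset.sum_congr rfl fun i (_ : i ∈ Finset.univ) => Finset.sum_add_distrib]
    rw [Finset.sum_add_distrib]
    congr 1
    exact Finset.sum_congr rfl fun i _ => by rw [Finset.sum_mul]
  -- F
  set F : (Fin k → Fin n → ℝ) → ℝ := fun x => ∑ i, ((∑ j, α j * (chat i * x j i)) +
    max 0 ((∑ j, α j * (d i * x j i)) - θ)) with hF
  have hFsplit : ∀ x, F x = (∑ i, ∑ j, α j * (chat i * x j i)) +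
      ∑ i, max 0 ((∑ j, α j * (d i * x j i)) - θ) := fun x => Finset.sum_add_distrib
  -- weak duality
  have hweak : ∀ x : Fin k → Fin n → ℝ, (∀ j, x j ∈ X) →
      cost n k chat d Γ x ≤ Γ * θ + F x := by
    intro x hx
    refine csSup_le (hImne x) ?_
    rintro y ⟨c, hc, rfl⟩
    obtain ⟨zz, hzzb, hzzΓ, hczz⟩ := hc
    have hcfun : ∀ j, ∑ i, c i * x j i = ∑ i, (chat i + d i * zz i) * x j i := by
      intro j; exact Finset.sum_congr rfl fun i _ => by rw [hczz i]
    have step1 : (⨅ j, ∑ i, c i * x j i) ≤ ∑ j, α j * (∑ i, c i * x j i) := by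
      obtain ⟨jm, hjm⟩ := Finite.exists_min (fun j => ∑ i, c i * x j i)
      have h1 : (⨅ j, ∑ i, c i * x j i) ≤ ∑ i, c i * x jm i := ciInf_le (hbddR c x) jm
      have h2 : ∑ j, α j * (∑ i, c i * x jm i) ≤ ∑ j, α j * (∑ i, c i * x j i) :=
        Finset.sum_le_sum fun j _ => mul_le_mul_of_nonneg_left (hjm j) (hα0 j)
      have h3 : ∑ j, α j * (∑ i, c i * x jm i) = ∑ i, c i * x jm i := by
        rw [← Finset.sum_mul, hα1, one_mul]
      linarith
    have step2 : ∑ j, α j * (∑ i, c i * x j i) =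
        (∑ i, ∑ j, α j * (chat i * x j i)) + ∑ i, (∑ j, α j * (d i * x j i)) * zz i := by
      rw [Finset.sum_congr rfl fun j _ => by rw [hcfun j]]
      exact halg x zz
    have step3 : ∑ i, (∑ j, α j * (d i * x j i)) * zz i ≤
        Γ * θ + ∑ i, max 0 ((∑ j, α j * (d i * x j i)) - θ) := by
      have e : ∀ i : Fin n, (∑ j, α j * (d i * x j i)) * zz i =
          ((∑ j, α j * (d i * x j i)) - θ) * zz i + θ * zz i := fun i => by ring
      rw [Finset.sum_congr rfl fun i _ => e i, Finset.sum_add_distrib]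
      have t1 : ∀ i : Fin n, ((∑ j, α j * (d i * x j i)) - θ) * zz i ≤
          max 0 ((∑ j, α j * (d i * x j i)) - θ) := by
        intro i
        rcases le_or_gt 0 ((∑ j, α j * (d i * x j i)) - θ) with h | h
        · calc ((∑ j, α j * (d i * x j i)) - θ) * zz i ≤
              ((∑ j, α j * (d i * x j i)) - θ) * 1 :=
                mul_le_mul_of_nonneg_left (hzzb i).2 h
          _ = _ := by rw [mul_one]
          _ ≤ _ := le_max_right _ _
        · calc ((∑ j, α j * (d i * x j i)) - θ) * zz i ≤ 0 :=
              mul_nonpos_of_nonpos_of_nonneg h.le (hzzb i).1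
          _ ≤ _ := le_max_left _ _
      have t2 : ∑ i, θ * zz i ≤ Γ * θ := by
        rw [← Finset.mul_sum]
        nlinarith
      have t3 : ∑ i, ((∑ j, α j * (d i * x j i)) - θ) * zz i ≤
          ∑ i, max 0 ((∑ j, α j * (d i * x j i)) - θ) :=
        Finset.sum_le_sum fun i _ => t1 i
      linarith
    rw [hFsplit]
    linarith
  -- strong direction
  have hstrong : Γ * θ + F xs ≤ v := by
    set c : Fin n → ℝ := fun i => chat i + d i * z i with hc
    have hcU : c ∈ U := ⟨z, hzb, hzΓ, fun i => rfl⟩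
    have hyK : (fun j => ∑ i, c i * xs j i) ∈ K := ⟨c, hcU, rfl⟩
    have h1 := hαle _ hyK
    have h2 : ∑ j, α j * (∑ i, c i * xs j i) =
        (∑ i, ∑ j, α j * (chat i * xs j i)) + ∑ i, w i * z i := by
      have := halg xs z
      rw [hw]
      exact this
    rw [h2] at h1
    rw [hFsplit]
    have hmaxeq : ∑ i, max 0 ((∑ j, α j * (d i * xs j i)) - θ) = ∑ i, max 0 (w i - θ) := rfl
    rw [hmaxeq]
    linarith
  -- S2
  refine ⟨α, θ, hα0, hα1, hθ0, ?_⟩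
  set S2 : Set ℝ := {v : ℝ | ∃ x : Fin k → Fin n → ℝ, (∀ j, x j ∈ X) ∧ v = F x} with hS2
  have hS2eq : S2 = F '' T := by
    ext u
    constructor
    · rintro ⟨x, hx, rfl⟩; exact ⟨x, hx, rfl⟩
    · rintro ⟨x, hx, rfl⟩; exact ⟨x, hx, rfl⟩
  have hS2fin : S2.Finite := hS2eq ▸ hTfin.image _
  have hS2ne : S2.Nonempty := ⟨_, ⟨_, hTne.choose_spec, rfl⟩⟩
  have hge : Γ * θ + sInf S2 ≤ v := by
    have h1 : sInf S2 ≤ F xs := csInf_le hS2fin.bddBelow ⟨xs, hxsX, rfl⟩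
    linarith
  have hle : v ≤ Γ * θ + sInf S2 := by
    have h1 : v - Γ * θ ≤ sInf S2 := by
      refine le_csInf hS2ne ?_
      rintro b ⟨x, hx, rfl⟩
      have h2 : v ≤ cost n k chat d Γ x := csInf_le hS1fin.bddBelow ⟨x, hx, rfl⟩
      have h3 := hweak x hx
      linarith
    linarith
  linarith [hle, hge, hstrong]
end

section
/- Let v ∈ ℝ^n with v_i ≥ 0 for all i, and let Γ be a natural number with Γ ≤ n. Then inf { Γ·θ + Σ_{i=1}^n γ_i : θ ∈ ℝ, γ ∈ ℝ^n, θ ≥ 0, γ_i ≥ 0 for all i, θ + γ_i ≥ v_i for all i } = ‖v‖^(Γ), and the infimum is attained. -/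
/-!
The LP is the dual of `max {∑ i, v i * x i : 0 ≤ x ≤ 1, ∑ i, x i ≤ Γ}`. Weak duality is the estimate
`∑ i ∈ S, v i ≤ ∑ i ∈ S, (θ + γ i) ≤ Γ θ + ∑ i, γ i` for every `Γ`-subset `S`. For optimality take a
maximizing `Γ`-subset `S`: by an exchange argument every entry inside `S` dominates every entry
outside, so some threshold `θ ≥ 0` separates them, and `θ` with `γ i = (v i - θ)⁺` is feasible
with objective value exactly `∑ i ∈ S, v i`.
-/

/-- `‖v‖^(Γ)`: the maximum over subsets `S` of cardinality `Γ` of `Σ_{i∈S} v i`. -/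
noncomputable def gammaNorm (n : ℕ) (Γ : ℕ) (v : Fin n → ℝ) : ℝ :=
  sSup {s : ℝ | ∃ S : Finset (Fin n), S.card = Γ ∧ s = ∑ i ∈ S, v i}

open Finset

section

variable {ι : Type*}

theorem le_of_forall_card_eq_sum_le {v : ι → ℝ} {S : Finset ι}
    (hmax : ∀ T : Finset ι, T.card = S.card → ∑ i ∈ T, v i ≤ ∑ i ∈ S, v i)
    {i j : ι} (hi : i ∉ S) (hj : j ∈ S) : v i ≤ v j := by
  classical
  have hi' : i ∉ S.erase j := fun h => hi (mem_of_mem_erase h)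
  have hcard : (insert i (S.erase j)).card = S.card := by
    rw [card_insert_of_notMem hi', card_erase_of_mem hj]
    have := card_pos.mpr ⟨j, hj⟩
    omega
  have hswap := hmax _ hcard
  rw [sum_insert hi', ← sum_erase_add S v hj] at hswap
  linarith

variable [Fintype ι]

def dualObjectiveValues (Γ : ℕ) (v : ι → ℝ) : Set ℝ :=
  {w | ∃ (θ : ℝ) (γ : ι → ℝ), 0 ≤ θ ∧ (∀ i, 0 ≤ γ i) ∧
    (∀ i, θ + γ i ≥ v i) ∧ w = (Γ : ℝ) * θ + ∑ i, γ i}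

theorem sum_le_of_mem_dualObjectiveValues {v : ι → ℝ} {S : Finset ι} {w : ℝ}
    (hw : w ∈ dualObjectiveValues S.card v) : ∑ i ∈ S, v i ≤ w := by
  obtain ⟨θ, γ, -, hγ, hfeas, rfl⟩ := hw
  calc ∑ i ∈ S, v i ≤ ∑ i ∈ S, (θ + γ i) := sum_le_sum fun i _ => hfeas i
    _ = S.card * θ + ∑ i ∈ S, γ i := by rw [sum_add_distrib, sum_const, nsmul_eq_mul]
    _ ≤ S.card * θ + ∑ i, γ i :=
      add_le_add le_rfl (sum_le_sum_of_subset_of_nonneg S.subset_univ fun i _ _ => hγ i)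

theorem sum_mem_dualObjectiveValues {v : ι → ℝ} {S : Finset ι} {θ : ℝ} (hθ : 0 ≤ θ)
    (hin : ∀ i ∈ S, θ ≤ v i) (hout : ∀ i ∉ S, v i ≤ θ) :
    ∑ i ∈ S, v i ∈ dualObjectiveValues S.card v := by
  refine ⟨θ, fun i => max (v i - θ) 0, hθ, fun i => le_max_right _ _,
    fun i => by linarith [le_max_left (v i - θ) 0], ?_⟩
  have hsum : ∑ i, max (v i - θ) 0 = ∑ i ∈ S, (v i - θ) := by
    rw [← sum_subset S.subset_univ fun i _ hi => max_eq_right (by linarith [hout i hi])]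
    exact sum_congr rfl fun i hi => max_eq_left (by linarith [hin i hi])
  rw [hsum, sum_sub_distrib, sum_const, nsmul_eq_mul]
  ring

theorem exists_card_eq_forall_sum_le (v : ι → ℝ) {Γ : ℕ} (hΓ : Γ ≤ Fintype.card ι) :
    ∃ S : Finset ι, S.card = Γ ∧ ∀ T : Finset ι, T.card = Γ → ∑ i ∈ T, v i ≤ ∑ i ∈ S, v i := by
  obtain ⟨S, hS, hmax⟩ := exists_max_image (powersetCard Γ univ) (fun S => ∑ i ∈ S, v i)
    (powersetCard_nonempty.mpr (by simpa using hΓ))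
  exact ⟨S, (mem_powersetCard.mp hS).2,
    fun T hT => hmax T (mem_powersetCard.mpr ⟨T.subset_univ, hT⟩)⟩

theorem exists_threshold_of_forall_card_eq_sum_le {v : ι → ℝ} (hv : ∀ i, 0 ≤ v i)
    {S : Finset ι} (hmax : ∀ T : Finset ι, T.card = S.card → ∑ i ∈ T, v i ≤ ∑ i ∈ S, v i) :
    ∃ θ, 0 ≤ θ ∧ (∀ i ∈ S, θ ≤ v i) ∧ ∀ i ∉ S, v i ≤ θ := by
  rcases S.eq_empty_or_nonempty with rfl | hS
  · exact ⟨⨆ i, v i, Real.iSup_nonneg hv, by simp,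
      fun i _ => le_ciSup (Set.finite_range v).bddAbove i⟩
  · obtain ⟨j, hj, hjmin⟩ := S.exists_min_image v hS
    exact ⟨v j, hv j, hjmin, fun i hi => le_of_forall_card_eq_sum_le hmax hi hj⟩

theorem isLeast_dualObjectiveValues {v : ι → ℝ} (hv : ∀ i, 0 ≤ v i) {S : Finset ι}
    (hmax : ∀ T : Finset ι, T.card = S.card → ∑ i ∈ T, v i ≤ ∑ i ∈ S, v i) :
    IsLeast (dualObjectiveValues S.card v) (∑ i ∈ S, v i) := by
  obtain ⟨θ, hθ, hin, hout⟩ := exists_threshold_of_forall_card_eq_sum_le hv hmax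
  exact ⟨sum_mem_dualObjectiveValues hθ hin hout, fun _ => sum_le_of_mem_dualObjectiveValues⟩

end

theorem gammaNorm_eq_sum {n Γ : ℕ} {v : Fin n → ℝ} {S : Finset (Fin n)} (hS : S.card = Γ)
    (hmax : ∀ T : Finset (Fin n), T.card = Γ → ∑ i ∈ T, v i ≤ ∑ i ∈ S, v i) :
    gammaNorm n Γ v = ∑ i ∈ S, v i :=
  IsGreatest.csSup_eq ⟨⟨S, hS, rfl⟩, by rintro _ ⟨T, hT, rfl⟩; exact hmax T hT⟩

theorem stmt3_general (n : ℕ) (v : Fin n → ℝ) (hv : ∀ i, 0 ≤ v i)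
    (Γ : ℕ) (hΓ : Γ ≤ n) :
    sInf {w : ℝ | ∃ (θ : ℝ) (γ : Fin n → ℝ), 0 ≤ θ ∧ (∀ i, 0 ≤ γ i) ∧
        (∀ i, θ + γ i ≥ v i) ∧ w = (Γ : ℝ) * θ + ∑ i, γ i} = gammaNorm n Γ v
    ∧ gammaNorm n Γ v ∈ {w : ℝ | ∃ (θ : ℝ) (γ : Fin n → ℝ), 0 ≤ θ ∧ (∀ i, 0 ≤ γ i) ∧
        (∀ i, θ + γ i ≥ v i) ∧ w = (Γ : ℝ) * θ + ∑ i, γ i} := by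
  obtain ⟨S, rfl, hmax⟩ := exists_card_eq_forall_sum_le v (by simpa using hΓ)
  have hleast := isLeast_dualObjectiveValues hv hmax
  rw [gammaNorm_eq_sum rfl hmax]
  exact ⟨hleast.csInf_eq, hleast.1⟩

/-- the LP `min{Γθ + Σ γ_i : θ ≥ 0, γ ≥ 0, θ + γ_i ≥ v_i}` has optimal
value `‖v‖^(Γ)`, and the infimum is attained. -/
theorem stmt3 (n : ℕ) (hn : 1 ≤ n) (v : Fin n → ℝ) (hv : ∀ i, 0 ≤ v i)
    (Γ : ℕ) (hΓ : Γ ≤ n) :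
    sInf {w : ℝ | ∃ (θ : ℝ) (γ : Fin n → ℝ), 0 ≤ θ ∧ (∀ i, 0 ≤ γ i) ∧
        (∀ i, θ + γ i ≥ v i) ∧ w = (Γ : ℝ) * θ + ∑ i, γ i} = gammaNorm n Γ v
    ∧ gammaNorm n Γ v ∈ {w : ℝ | ∃ (θ : ℝ) (γ : Fin n → ℝ), 0 ≤ θ ∧ (∀ i, 0 ≤ γ i) ∧
        (∀ i, θ + γ i ≥ v i) ∧ w = (Γ : ℝ) * θ + ∑ i, γ i} :=
  stmt3_general n v hv Γ hΓ
end

section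
/- Let v ∈ ℝ^n with v_i ≥ 0 for all i, and let Γ be a natural number with Γ ≤ n. Then sup { Σ_{i=1}^n v_i z_i : z ∈ [0,1]^n, Σ_{i=1}^n z_i ≤ Γ } = ‖v‖^(Γ), i.e., the maximum of a linear function with nonnegative coefficients over the budgeted box {z ∈ [0,1]^n : Σ z_i ≤ Γ} equals the sum of the Γ largest entries of v. -/
lemma exists_topset (n Γ : ℕ) (v : Fin n → ℝ) (hΓ : Γ ≤ n) :
    ∃ S : Finset (Fin n), S.card = Γ ∧ ∀ i ∈ S, ∀ j, j ∉ S → v j ≤ v i := by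
  induction Γ with
  | zero => exact ⟨∅, rfl, by simp⟩
  | succ k ih =>
    obtain ⟨S, hcard, hS⟩ := ih (Nat.le_of_succ_le hΓ)
    have hne : (Finset.univ \ S).Nonempty := by
      rw [← Finset.card_pos, Finset.card_sdiff_of_subset (Finset.subset_univ S)]
      simp only [Finset.card_univ, Fintype.card_fin, hcard]
      omega
    obtain ⟨i0, hi0, hmax⟩ := Finset.exists_max_image _ v hne
    have hi0S : i0 ∉ S := (Finset.mem_sdiff.mp hi0).2
    refine ⟨insert i0 S, ?_, ?_⟩
    · rw [Finset.card_insert_of_notMem hi0S, hcard]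
    · intro i hi j hj
      rw [Finset.mem_insert] at hi
      have hjS : j ∉ S := fun h => hj (Finset.mem_insert_of_mem h)
      rcases hi with rfl | hi
      · exact hmax j (Finset.mem_sdiff.mpr ⟨Finset.mem_univ j, hjS⟩)
      · exact hS i hi j hjS

lemma key_bound {n : ℕ} (v : Fin n → ℝ) (hv : ∀ i, 0 ≤ v i) (Γ : ℕ)
    (S : Finset (Fin n)) (hcard : S.card = Γ)
    (htop : ∀ i ∈ S, ∀ j, j ∉ S → v j ≤ v i)
    (z : Fin n → ℝ) (hz : ∀ i, 0 ≤ z i ∧ z i ≤ 1) (hsum : ∑ i, z i ≤ (Γ : ℝ)) :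
    ∑ i, v i * z i ≤ ∑ i ∈ S, v i := by
  rcases Nat.eq_zero_or_pos Γ with rfl | hpos
  · have hz0 : ∀ i ∈ Finset.univ, z i = 0 :=
      (Finset.sum_eq_zero_iff_of_nonneg (fun i _ => (hz i).1)).1
        (le_antisymm (by simpa using hsum) (Finset.sum_nonneg fun i _ => (hz i).1))
    have hS0 : S = ∅ := Finset.card_eq_zero.mp hcard
    have : ∀ i ∈ Finset.univ, v i * z i = 0 := fun i hi => by
      rw [hz0 i hi, mul_zero]
    rw [Finset.sum_congr rfl this, hS0]
    simp
  · have hSne : S.Nonempty := Finset.card_pos.mp (hcard ▸ hpos)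
    set t := S.inf' hSne v with ht
    obtain ⟨i0, hi0, hti0⟩ := Finset.exists_mem_eq_inf' hSne v
    have htv : t = v i0 := by rw [ht, hti0]
    have ht0 : 0 ≤ t := htv ▸ hv i0
    have htle : ∀ i ∈ S, t ≤ v i := fun i hi => Finset.inf'_le v hi
    have houtside : ∀ j, j ∉ S → v j ≤ t := fun j hj => htv ▸ htop i0 hi0 j hj
    have h1 : ∑ i, (v i - t) * z i ≤ ∑ i ∈ S, (v i - t) := by
      have hsplit : ∑ i, (v i - t) * z i
          = ∑ i ∈ S, (v i - t) * z i + ∑ i ∈ Sᶜ, (v i - t) * z i :=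
        (Finset.sum_add_sum_compl S _).symm
      rw [hsplit]
      have hA : ∑ i ∈ S, (v i - t) * z i ≤ ∑ i ∈ S, (v i - t) :=
        Finset.sum_le_sum fun i hi =>
          mul_le_of_le_one_right (sub_nonneg.mpr (htle i hi)) (hz i).2
      have hB : ∑ i ∈ Sᶜ, (v i - t) * z i ≤ 0 :=
        Finset.sum_nonpos fun i hi =>
          mul_nonpos_of_nonpos_of_nonneg
            (sub_nonpos.mpr (houtside i (Finset.mem_compl.mp hi))) (hz i).1
      linarith
    have h2 : t * ∑ i, z i ≤ t * Γ := mul_le_mul_of_nonneg_left hsum ht0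
    have heq : ∑ i, v i * z i = ∑ i, (v i - t) * z i + t * ∑ i, z i := by
      rw [Finset.mul_sum, ← Finset.sum_add_distrib]
      exact Finset.sum_congr rfl fun i _ => by ring
    have heq2 : ∑ i ∈ S, (v i - t) + t * Γ = ∑ i ∈ S, v i := by
      rw [Finset.sum_sub_distrib, Finset.sum_const, hcard, nsmul_eq_mul]
      ring
    linarith

lemma indicator_val {n : ℕ} (v : Fin n → ℝ) (T : Finset (Fin n)) :
    ∑ i, v i * (if i ∈ T then (1:ℝ) else 0) = ∑ i ∈ T, v i := by
  simp [mul_ite, Finset.sum_ite_mem]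

lemma indicator_sum {n : ℕ} (T : Finset (Fin n)) :
    ∑ i, (if i ∈ T then (1:ℝ) else 0) = (T.card : ℝ) := by
  simp [Finset.sum_ite_mem]

/-- the maximum of a linear function with nonnegative coefficients over
the budgeted box `{z ∈ [0,1]^n : Σ z_i ≤ Γ}` equals the sum of the `Γ` largest entries. -/
theorem stmt4 (n : ℕ) (hn : 1 ≤ n) (v : Fin n → ℝ) (hv : ∀ i, 0 ≤ v i)
    (Γ : ℕ) (hΓ : Γ ≤ n) :
    sSup {s : ℝ | ∃ z : Fin n → ℝ, (∀ i, 0 ≤ z i ∧ z i ≤ 1) ∧ (∑ i, z i) ≤ (Γ : ℝ) ∧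
        s = ∑ i, v i * z i} = gammaNorm n Γ v := by
  obtain ⟨S, hcard, htop⟩ := exists_topset n Γ v hΓ
  have hAg : IsGreatest {s : ℝ | ∃ z : Fin n → ℝ, (∀ i, 0 ≤ z i ∧ z i ≤ 1) ∧
      (∑ i, z i) ≤ (Γ : ℝ) ∧ s = ∑ i, v i * z i} (∑ i ∈ S, v i) := by
    constructor
    · refine ⟨fun i => if i ∈ S then 1 else 0, ?_, ?_, ?_⟩
      · intro i; by_cases h : i ∈ S <;> simp [h]
      · rw [indicator_sum, hcard]
      · rw [indicator_val]
    · rintro s ⟨z, hz, hsum, rfl⟩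
      exact key_bound v hv Γ S hcard htop z hz hsum
  have hBg : IsGreatest {s : ℝ | ∃ T : Finset (Fin n), T.card = Γ ∧ s = ∑ i ∈ T, v i}
      (∑ i ∈ S, v i) := by
    constructor
    · exact ⟨S, hcard, rfl⟩
    · rintro s ⟨T, hT, rfl⟩
      have := key_bound v hv Γ S hcard htop (fun i => if i ∈ T then 1 else 0)
        (fun i => by by_cases h : i ∈ T <;> simp [h])
        (by rw [indicator_sum, hT])
      rwa [indicator_val] at this
  rw [hAg.csSup_eq, gammaNorm, hBg.csSup_eq]
end

section
/- Let v ∈ ℝ^n with v_i ≥ 0 for all i, let t ∈ ℝ with 0 ≤ t and ⌊t⌋ < n, and let σ be a permutation of {1,…,n} such that v_{σ(1)} ≥ v_{σ(2)} ≥ … ≥ v_{σ(n)} (a decreasing rearrangement of v). Then sup { Σ_{i=1}^n v_i z_i : z ∈ [0,1]^n, Σ_{i=1}^n z_i ≤ t } = Σ_{j=1}^{⌊t⌋} v_{σ(j)} + (t − ⌊t⌋)·v_{σ(⌊t⌋+1)}. -/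
/-!
Reindex by `σ` so that the weights `w = v ∘ σ` are antitone, and put `k = ⌊t⌋`, `θ = t - ⌊t⌋`.
The greedy vector `c` filling the first `k` coordinates with `1` and coordinate `k` with `θ`
attains the right-hand side. It is optimal by a Lagrangian exchange argument with multiplier
`w k ≥ 0`: for every feasible `z`, each term `(w j - w k) * (z j - c j)` is nonpositive, so
`∑ w z - ∑ w c ≤ w k * (∑ z - t) ≤ 0`.
-/

open Finset

theorem Finset.sum_mul_le_sum_mul_of_sub_mul_sub_nonpos {ι R : Type*}
    [CommRing R] [LinearOrder R] [IsStrictOrderedRing R] (s : Finset ι) {w z c : ι → R} {a : R}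
    (ha : 0 ≤ a) (hexch : ∀ j ∈ s, (w j - a) * (z j - c j) ≤ 0)
    (hsum : ∑ j ∈ s, z j ≤ ∑ j ∈ s, c j) :
    ∑ j ∈ s, w j * z j ≤ ∑ j ∈ s, w j * c j := by
  have hsplit : ∑ j ∈ s, w j * z j - ∑ j ∈ s, w j * c j
      = ∑ j ∈ s, (w j - a) * (z j - c j) + a * (∑ j ∈ s, z j - ∑ j ∈ s, c j) := by
    simp only [mul_sub, sub_mul, Finset.sum_sub_distrib, Finset.mul_sum]
    ring
  have hexch_sum := Finset.sum_nonpos hexch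
  have hmult : a * (∑ j ∈ s, z j - ∑ j ∈ s, c j) ≤ 0 :=
    mul_nonpos_of_nonneg_of_nonpos ha (sub_nonpos.2 hsum)
  linarith

section FractionalFill

variable {n : ℕ}

def fracFill (k : Fin n) (θ : ℝ) (j : Fin n) : ℝ :=
  if j < k then 1 else if j = k then θ else 0

theorem fracFill_mem_Icc {k : Fin n} {θ : ℝ} (hθ : θ ∈ Set.Icc 0 1) (j : Fin n) :
    fracFill k θ j ∈ Set.Icc 0 1 := by
  unfold fracFill
  split_ifs <;> simp [hθ]

theorem sum_mul_fracFill (w : Fin n → ℝ) (k : Fin n) (θ : ℝ) :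
    ∑ j, w j * fracFill k θ j = ∑ j ∈ Iio k, w j + θ * w k := by
  have hsplit : ∀ j, w j * fracFill k θ j
      = (if j < k then w j else 0) + (if j = k then θ * w j else 0) := by
    intro j
    unfold fracFill
    split_ifs with hlt heq <;> simp_all [mul_comm]
  simp only [hsplit, sum_add_distrib, sum_ite_eq', mem_univ, if_true, ← sum_filter,
    filter_gt_eq_Iio]

theorem sum_fracFill (k : Fin n) (θ : ℝ) : ∑ j, fracFill k θ j = k + θ := by
  simpa using sum_mul_fracFill 1 k θ

theorem sum_mul_le_sum_mul_fracFill {w z : Fin n → ℝ} {k : Fin n} {θ : ℝ} (hw : Antitone w)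
    (hwk : 0 ≤ w k) (hz : ∀ j, z j ∈ Set.Icc 0 1) (hsum : ∑ j, z j ≤ k + θ) :
    ∑ j, w j * z j ≤ ∑ j, w j * fracFill k θ j := by
  refine sum_mul_le_sum_mul_of_sub_mul_sub_nonpos univ hwk (fun j _ => ?_)
    (by rwa [sum_fracFill])
  unfold fracFill
  rcases lt_trichotomy j k with hlt | rfl | hgt
  · rw [if_pos hlt]
    exact mul_nonpos_of_nonneg_of_nonpos (sub_nonneg.2 (hw hlt.le)) (sub_nonpos.2 (hz j).2)
  · simp
  · rw [if_neg hgt.not_gt, if_neg hgt.ne']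
    exact mul_nonpos_of_nonpos_of_nonneg (sub_nonpos.2 (hw hgt.le)) (sub_nonneg.2 (hz j).1)

end FractionalFill

theorem stmt5_general (n : ℕ) (v : Fin n → ℝ) (hv : ∀ i, 0 ≤ v i)
    (t : ℝ) (ht : 0 ≤ t) (hfloor : ⌊t⌋₊ < n)
    (σ : Equiv.Perm (Fin n)) (hσ : ∀ i j : Fin n, i ≤ j → v (σ j) ≤ v (σ i)) :
    sSup {s : ℝ | ∃ z : Fin n → ℝ, (∀ i, 0 ≤ z i ∧ z i ≤ 1) ∧ (∑ i, z i) ≤ t ∧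
        s = ∑ i, v i * z i}
      = (∑ j : Fin n, if (j : ℕ) < ⌊t⌋₊ then v (σ j) else 0)
        + (t - ⌊t⌋₊) * v (σ ⟨⌊t⌋₊, hfloor⟩) := by
  set k : Fin n := ⟨⌊t⌋₊, hfloor⟩
  have hθ : t - ⌊t⌋₊ ∈ Set.Icc 0 1 :=
    ⟨sub_nonneg.2 (Nat.floor_le ht), by linarith [Nat.lt_floor_add_one t]⟩
  have hbudget : (k : ℝ) + (t - ⌊t⌋₊) = t := by simp [k]
  have hvalue : (∑ j : Fin n, if (j : ℕ) < ⌊t⌋₊ then v (σ j) else 0) + (t - ⌊t⌋₊) * v (σ k)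
      = ∑ j, v (σ j) * fracFill k (t - ⌊t⌋₊) j := by
    rw [sum_mul_fracFill, ← filter_gt_eq_Iio, sum_filter]
    rfl
  rw [hvalue]
  refine IsGreatest.csSup_eq ⟨⟨fun i => fracFill k (t - ⌊t⌋₊) (σ.symm i),
    fun i => fracFill_mem_Icc hθ _, ?_, ?_⟩, ?_⟩
  · rw [Equiv.sum_comp σ.symm (fracFill k _), sum_fracFill, hbudget]
  · rw [← Equiv.sum_comp σ (fun i => v i * fracFill k _ (σ.symm i))]
    simp
  · rintro _ ⟨z, hz, hzt, rfl⟩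
    rw [← Equiv.sum_comp σ]
    refine sum_mul_le_sum_mul_fracFill hσ (hv _) (fun j => hz (σ j)) ?_
    rwa [Equiv.sum_comp σ z, hbudget]

/-- for a fractional budget `t`, the maximum of `Σ v_i z_i` over the
budgeted box equals the sum of the `⌊t⌋` largest entries plus the fractional part
times the `(⌊t⌋+1)`-st largest entry. -/
theorem stmt5 (n : ℕ) (hn : 1 ≤ n) (v : Fin n → ℝ) (hv : ∀ i, 0 ≤ v i)
    (t : ℝ) (ht : 0 ≤ t) (hfloor : ⌊t⌋₊ < n)
    (σ : Equiv.Perm (Fin n)) (hσ : ∀ i j : Fin n, i ≤ j → v (σ j) ≤ v (σ i)) :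
    sSup {s : ℝ | ∃ z : Fin n → ℝ, (∀ i, 0 ≤ z i ∧ z i ≤ 1) ∧ (∑ i, z i) ≤ t ∧
        s = ∑ i, v i * z i}
      = (∑ j : Fin n, if (j : ℕ) < ⌊t⌋₊ then v (σ j) else 0)
        + (t - ⌊t⌋₊) * v (σ ⟨⌊t⌋₊, hfloor⟩) :=
  stmt5_general n v hv t ht hfloor σ hσ
end

section
/- Let Γ be a natural number with 1 ≤ Γ ≤ n and let x, y ∈ {0,1}^n. Then sup_{c∈U^Γ} min( Σ_{i=1}^n c_i x_i , Σ_{i=1}^n c_i y_i ) = min_{α∈[0,1]} g(x,y,α). That is, for k = 2 the worst-case cost of the pair (x,y) over the budgeted uncertainty set equals the minimum over α ∈ [0,1] of g(x,y,α). -/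
/-- The function `g(x,y,α)` from the k = 2 reformulation. -/
noncomputable def g (n : ℕ) (Γn : ℕ) (chat d : Fin n → ℝ) (x y : Fin n → ℝ) (α : ℝ) : ℝ :=
  α * ∑ i, chat i * x i + (1 - α) * ∑ i, chat i * y i +
    gammaNorm n Γn (fun i => d i * (α * x i + (1 - α) * y i))

/-!
Both costs are linear in `c`, so the worst case `v` of their minimum is a minimax value of two
linear functionals over the convex set `U^Γ`. The image of `U^Γ` under `c ↦ (c·x, c·y)` misses
the open quadrant above `(v, v)`; a line separating the two has a normal `(α, 1 - α)` with
`α ∈ [0, 1]`, i.e. `α c·x + (1 - α) c·y ≤ v` on `U^Γ`. The maximum of that weighted cost over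
`U^Γ` is `g(x, y, α)`: a nonnegative linear objective over `{z ∈ [0,1]^n | Σ z ≤ Γ}` is maximised
by the indicator of its `Γ` largest weights.
-/

open Set Finset

theorem exists_weight_le_of_forall_min_le {K : Set (ℝ × ℝ)} (hK : Convex ℝ K) {v : ℝ}
    (hv : ∀ p ∈ K, min p.1 p.2 ≤ v) :
    ∃ α ∈ Icc (0 : ℝ) 1, ∀ p ∈ K, α * p.1 + (1 - α) * p.2 ≤ v := by
  obtain rfl | hKne := K.eq_empty_or_nonempty
  · exact ⟨0, left_mem_Icc.2 zero_le_one, by simp⟩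
  have hint : interior (Ici v ×ˢ Ici v) = Ioi v ×ˢ Ioi v := by
    rw [interior_prod_eq, interior_Ici]
  have hdisj : Disjoint (interior (Ici v ×ˢ Ici v)) K := by
    rw [hint, Set.disjoint_left]
    rintro p ⟨h1, h2⟩ hp
    exact (lt_min h1 h2).not_ge (hv p hp)
  obtain ⟨f, u, hf, hfQ, hfK⟩ := geometric_hahn_banach_of_nonempty_interior
    ((convex_Ici v).prod (convex_Ici v)) hK hdisj
    ⟨(v + 1, v + 1), by rw [hint]; constructor <;> simp⟩ hKne
  set r := f (1, 0)
  set q := f (0, 1)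
  have hf_apply : ∀ p : ℝ × ℝ, f p = r * p.1 + q * p.2 := fun p => by
    have : p = p.1 • ((1 : ℝ), (0 : ℝ)) + p.2 • ((0 : ℝ), (1 : ℝ)) := by ext <;> simp
    rw [this, map_add, map_smul, map_smul]; simp [r, q, mul_comm]
  have hfv : r * v + q * v ≤ u := by
    simpa [hf_apply] using hfQ (v, v) ⟨le_refl v, le_refl v⟩
  have hr : r ≤ 0 := by
    by_contra! hr
    have := hfQ (v + (u - r * v - q * v + 1) / r, v)
      ⟨le_add_of_nonneg_right (div_nonneg (by linarith) hr.le), le_refl v⟩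
    rw [hf_apply, mul_add, mul_div_cancel₀ _ hr.ne'] at this
    linarith
  have hq : q ≤ 0 := by
    by_contra! hq
    have := hfQ (v, v + (u - r * v - q * v + 1) / q)
      ⟨le_refl v, le_add_of_nonneg_right (div_nonneg (by linarith) hq.le)⟩
    rw [hf_apply, mul_add q, mul_div_cancel₀ _ hq.ne'] at this
    linarith
  have hrq : r + q < 0 := by
    refine lt_of_le_of_ne (by linarith) fun hrq => hf ?_
    refine ContinuousLinearMap.ext fun p => ?_
    rw [hf_apply, show r = 0 by linarith, show q = 0 by linarith]
    simp
  refine ⟨r / (r + q), ⟨div_nonneg_of_nonpos hr hrq.le, (div_le_one_of_neg hrq).2 (by linarith)⟩,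
    fun p hp => ?_⟩
  have hp := hfK p hp
  rw [hf_apply] at hp
  rw [one_sub_div hrq.ne, add_sub_cancel_left, div_mul_eq_mul_div, div_mul_eq_mul_div,
    ← add_div, div_le_iff_of_neg hrq]
  linarith

theorem sSup_image_min_eq_sInf_of_isGreatest {E : Type*} [AddCommGroup E] [Module ℝ E]
    {U : Set E} (hU : Convex ℝ U) (hne : U.Nonempty) (f₁ f₂ : E →ₗ[ℝ] ℝ) (G : ℝ → ℝ)
    (hG : ∀ α ∈ Icc (0 : ℝ) 1, IsGreatest ((fun c => α * f₁ c + (1 - α) * f₂ c) '' U) (G α)) :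
    sSup ((fun c => min (f₁ c) (f₂ c)) '' U) = sInf (G '' Icc 0 1) := by
  have hmin_le : ∀ α ∈ Icc (0 : ℝ) 1, ∀ c ∈ U, min (f₁ c) (f₂ c) ≤ G α := fun α hα c hc =>
    (Convex.min_le_combo _ _ hα.1 (sub_nonneg.2 hα.2) (add_sub_cancel _ _)).trans
      ((hG α hα).2 ⟨c, hc, rfl⟩)
  have hbdd : BddAbove ((fun c => min (f₁ c) (f₂ c)) '' U) :=
    ⟨G 0, by rintro _ ⟨c, hc, rfl⟩; exact hmin_le 0 (left_mem_Icc.2 zero_le_one) c hc⟩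
  obtain ⟨α, hα, hαK⟩ := exists_weight_le_of_forall_min_le (hU.linear_image (f₁.prod f₂))
    (v := sSup ((fun c => min (f₁ c) (f₂ c)) '' U)) (by
      rintro _ ⟨c, hc, rfl⟩
      exact le_csSup hbdd ⟨c, hc, rfl⟩)
  obtain ⟨c₀, hc₀⟩ := hne
  apply le_antisymm
  · refine csSup_le ⟨_, c₀, hc₀, rfl⟩ ?_
    rintro _ ⟨c, hc, rfl⟩
    refine le_csInf ((Set.nonempty_Icc.2 zero_le_one).image G) ?_
    rintro _ ⟨α, hα, rfl⟩
    exact hmin_le α hα c hc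
  · obtain ⟨c, hc, hcα⟩ := (hG α hα).1
    calc sInf (G '' Icc 0 1) ≤ G α :=
          csInf_le ⟨_, by rintro _ ⟨β, hβ, rfl⟩; exact hmin_le β hβ c₀ hc₀⟩ ⟨α, hα, rfl⟩
      _ ≤ _ := hcα ▸ hαK _ ⟨c, hc, rfl⟩

theorem sum_mul_le_sum_of_threshold {ι : Type*} [Fintype ι] (S : Finset ι) {w z : ι → ℝ}
    {m : ℝ} (hm : 0 ≤ m) (hS : ∀ i ∈ S, m ≤ w i) (hSc : ∀ i ∉ S, w i ≤ m)
    (hz : ∀ i, 0 ≤ z i ∧ z i ≤ 1) (hzS : ∑ i, z i ≤ #S) :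
    ∑ i, w i * z i ≤ ∑ i ∈ S, w i := by
  classical
  have hpoint : ∀ i,
      w i * z i ≤ (if i ∈ S then w i else 0) + m * (z i - if i ∈ S then 1 else 0) := by
    intro i
    split_ifs with hi
    · nlinarith [hS i hi, hz i]
    · nlinarith [hSc i hi, hz i]
  calc ∑ i, w i * z i ≤ ∑ i, ((if i ∈ S then w i else 0) + m * (z i - if i ∈ S then 1 else 0)) :=
        sum_le_sum fun i _ => hpoint i
    _ = ∑ i ∈ S, w i + m * (∑ i, z i - #S) := by
        rw [sum_add_distrib, ← mul_sum, sum_sub_distrib, sum_ite_mem, sum_boole, Finset.univ_inter,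
          filter_mem_eq_inter, Finset.univ_inter]
    _ ≤ ∑ i ∈ S, w i := by nlinarith

theorem finite_gammaNorm_set (n Γ : ℕ) (v : Fin n → ℝ) :
    {s : ℝ | ∃ S : Finset (Fin n), #S = Γ ∧ s = ∑ i ∈ S, v i}.Finite :=
  (Set.finite_range fun S : Finset (Fin n) => ∑ i ∈ S, v i).subset
    (by rintro _ ⟨S, -, rfl⟩; exact ⟨S, rfl⟩)

theorem sum_le_gammaNorm {n Γ : ℕ} (v : Fin n → ℝ) {S : Finset (Fin n)} (hS : #S = Γ) :
    ∑ i ∈ S, v i ≤ gammaNorm n Γ v :=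
  le_csSup (finite_gammaNorm_set n Γ v).bddAbove ⟨S, hS, rfl⟩

theorem exists_gammaNorm_eq_sum {n Γ : ℕ} (hΓn : Γ ≤ n) (v : Fin n → ℝ) :
    ∃ S : Finset (Fin n), #S = Γ ∧ gammaNorm n Γ v = ∑ i ∈ S, v i := by
  obtain ⟨S, -, hS⟩ := exists_subset_card_eq (s := (univ : Finset (Fin n))) (by simpa using hΓn)
  exact Set.Nonempty.csSup_mem (s := {s : ℝ | ∃ S : Finset (Fin n), #S = Γ ∧ s = ∑ i ∈ S, v i})
    ⟨_, S, hS, rfl⟩ (finite_gammaNorm_set n Γ v)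

theorem le_of_gammaNorm_eq_sum {n Γ : ℕ} {w : Fin n → ℝ} {S : Finset (Fin n)} (hS : #S = Γ)
    (hmax : gammaNorm n Γ w = ∑ i ∈ S, w i) {i j : Fin n} (hi : i ∈ S) (hj : j ∉ S) :
    w j ≤ w i := by
  have hj' : j ∉ S.erase i := fun h => hj (mem_of_mem_erase h)
  have := sum_le_gammaNorm (Γ := Γ) w (S := insert j (S.erase i)) (by
    rw [card_insert_of_notMem hj', card_erase_of_mem hi, hS]
    have : 0 < Γ := hS ▸ card_pos.2 ⟨i, hi⟩
    omega)
  rw [hmax, sum_insert hj', ← sum_erase_add S w hi] at this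
  linarith

theorem sum_mul_le_gammaNorm {n Γ : ℕ} (hΓ : 1 ≤ Γ) (hΓn : Γ ≤ n) {w z : Fin n → ℝ}
    (hw : ∀ i, 0 ≤ w i) (hz : ∀ i, 0 ≤ z i ∧ z i ≤ 1) (hzΓ : ∑ i, z i ≤ Γ) :
    ∑ i, w i * z i ≤ gammaNorm n Γ w := by
  obtain ⟨S, hS, hmax⟩ := exists_gammaNorm_eq_sum hΓn w
  obtain ⟨j, hj, hjmin⟩ := exists_min_image S w (card_pos.1 (by omega))
  rw [hmax]
  exact sum_mul_le_sum_of_threshold S (hw j) hjmin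
    (fun i hi => le_of_gammaNorm_eq_sum hS hmax hj hi) hz (hS ▸ hzΓ)

theorem convex_budgetSet (n : ℕ) (chat d : Fin n → ℝ) (Γ : ℝ) :
    Convex ℝ (budgetSet n chat d Γ) := by
  rintro c₁ ⟨z₁, hz₁, hΓ₁, hc₁⟩ c₂ ⟨z₂, hz₂, hΓ₂, hc₂⟩ a b ha hb hab
  refine ⟨a • z₁ + b • z₂, fun i => ⟨?_, ?_⟩, ?_, fun i => ?_⟩
  · simp only [Pi.add_apply, Pi.smul_apply, smul_eq_mul]
    nlinarith [hz₁ i, hz₂ i]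
  · simp only [Pi.add_apply, Pi.smul_apply, smul_eq_mul]
    nlinarith [hz₁ i, hz₂ i]
  · simp only [Pi.add_apply, Pi.smul_apply, smul_eq_mul, sum_add_distrib, ← mul_sum]
    calc a * ∑ i, z₁ i + b * ∑ i, z₂ i ≤ a * Γ + b * Γ := by gcongr
      _ = Γ := by rw [← add_mul, hab, one_mul]
  · simp only [Pi.add_apply, Pi.smul_apply, smul_eq_mul, hc₁, hc₂]
    linear_combination chat i * hab

theorem isGreatest_budgetSet_sum_mul {n Γ : ℕ} (hΓ : 1 ≤ Γ) (hΓn : Γ ≤ n) {chat d u : Fin n → ℝ}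
    (hd : ∀ i, 0 ≤ d i) (hu : ∀ i, 0 ≤ u i) :
    IsGreatest ((fun c => ∑ i, c i * u i) '' budgetSet n chat d Γ)
      (∑ i, chat i * u i + gammaNorm n Γ (fun i => d i * u i)) := by
  constructor
  · classical
    obtain ⟨S, hS, hmax⟩ := exists_gammaNorm_eq_sum hΓn fun i => d i * u i
    refine ⟨fun i => chat i + d i * if i ∈ S then 1 else 0,
      ⟨fun i => if i ∈ S then 1 else 0, fun i => ?_, ?_, fun i => rfl⟩, ?_⟩
    · dsimp only
      split_ifs <;> norm_num
    · simp [hS]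
    · simp only [add_mul, sum_add_distrib, hmax, mul_ite, ite_mul, mul_one, mul_zero, zero_mul,
        sum_ite_mem, Finset.univ_inter]
  · rintro _ ⟨c, ⟨z, hz, hzΓ, hc⟩, rfl⟩
    have hsum : ∑ i, c i * u i = ∑ i, chat i * u i + ∑ i, d i * u i * z i := by
      rw [← sum_add_distrib]
      exact sum_congr rfl fun i _ => by rw [hc]; ring
    dsimp only
    rw [hsum]
    gcongr
    exact sum_mul_le_gammaNorm hΓ hΓn (fun i => mul_nonneg (hd i) (hu i)) hz hzΓ

theorem isGreatest_budgetSet_g {n Γ : ℕ} (hΓ : 1 ≤ Γ) (hΓn : Γ ≤ n) {chat d x y : Fin n → ℝ}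
    (hd : ∀ i, 0 ≤ d i) (hx : ∀ i, 0 ≤ x i) (hy : ∀ i, 0 ≤ y i) {α : ℝ} (hα : α ∈ Icc (0 : ℝ) 1) :
    IsGreatest ((fun c => α * ∑ i, c i * x i + (1 - α) * ∑ i, c i * y i) '' budgetSet n chat d Γ)
      (g n Γ chat d x y α) := by
  have hcomb : ∀ c : Fin n → ℝ, α * ∑ i, c i * x i + (1 - α) * ∑ i, c i * y i
      = ∑ i, c i * (α * x i + (1 - α) * y i) := fun c => by
    simp only [mul_sum, ← sum_add_distrib]
    exact sum_congr rfl fun i _ => by ring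
  simp only [g, hcomb]
  exact isGreatest_budgetSet_sum_mul hΓ hΓn hd fun i =>
    add_nonneg (mul_nonneg hα.1 (hx i)) (mul_nonneg (sub_nonneg.2 hα.2) (hy i))

theorem stmt6_general (n : ℕ) (chat d : Fin n → ℝ) (hd : ∀ i, 0 ≤ d i)
    (Γ : ℕ) (hΓ1 : 1 ≤ Γ) (hΓn : Γ ≤ n)
    (x y : Fin n → ℝ) (hx : ∀ i, x i = 0 ∨ x i = 1) (hy : ∀ i, y i = 0 ∨ y i = 1) :
    sSup ((fun c => min (∑ i, c i * x i) (∑ i, c i * y i)) '' budgetSet n chat d (Γ : ℝ))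
      = sInf ((fun α => g n Γ chat d x y α) '' Set.Icc (0 : ℝ) 1) := by
  have hx₀ : ∀ i, 0 ≤ x i := fun i => by rcases hx i with h | h <;> simp [h]
  have hy₀ : ∀ i, 0 ≤ y i := fun i => by rcases hy i with h | h <;> simp [h]
  exact sSup_image_min_eq_sInf_of_isGreatest (convex_budgetSet n chat d Γ)
    ⟨chat, 0, fun _ => by simp, by simp, fun _ => by simp⟩
    ((dotProductBilin ℝ ℝ).flip x) ((dotProductBilin ℝ ℝ).flip y) _
    fun α hα => isGreatest_budgetSet_g hΓ1 hΓn hd hx₀ hy₀ hα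

/-- for `k = 2` the worst-case cost of the pair `(x,y)` over the budgeted
uncertainty set equals the minimum over `α ∈ [0,1]` of `g(x,y,α)`. -/
theorem stmt6 (n : ℕ) (hn : 1 ≤ n) (chat d : Fin n → ℝ) (hd : ∀ i, 0 ≤ d i)
    (Γ : ℕ) (hΓ1 : 1 ≤ Γ) (hΓn : Γ ≤ n)
    (x y : Fin n → ℝ) (hx : ∀ i, x i = 0 ∨ x i = 1) (hy : ∀ i, y i = 0 ∨ y i = 1) :
    sSup ((fun c => min (∑ i, c i * x i) (∑ i, c i * y i)) '' budgetSet n chat d (Γ : ℝ))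
      = sInf ((fun α => g n Γ chat d x y α) '' Set.Icc (0 : ℝ) 1) :=
  stmt6_general n chat d hd Γ hΓ1 hΓn x y hx hy
end

section
/- (Lemma 2.1, first inequality.) Let X ⊆ {0,1}^n be finite and nonempty and let 0 ≤ α₁ ≤ α₂ ≤ 1/2. Let (x₁*, y₁*) ∈ X × X be a minimizer over X × X of the function (x,y) ↦ g(x,y,α₁) + (α₂ − α₁)·underline∂g(x,y). Then for all α ∈ [α₁, α₂], h(α) ≥ h(α₁) + (α − α₁)·underline∂g(x₁*, y₁*). -/
/-- `h(α) = min_{x,y ∈ X} g(x,y,α)`. -/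
noncomputable def hfun (n : ℕ) (Γn : ℕ) (chat d : Fin n → ℝ)
    (X : Finset (Fin n → ℝ)) (α : ℝ) : ℝ :=
  sInf {w : ℝ | ∃ x ∈ X, ∃ y ∈ X, w = g n Γn chat d x y α}

/-- `underline∂g(x,y) = Σ ĉ_i x_i − Σ ĉ_i y_i − ‖(d_i y_i)_i‖^(Γ)`. -/
noncomputable def lowg (n : ℕ) (Γn : ℕ) (chat d : Fin n → ℝ) (x y : Fin n → ℝ) : ℝ :=
  (∑ i, chat i * x i) - (∑ i, chat i * y i) - gammaNorm n Γn (fun i => d i * y i)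

lemma gn_set_fin (n Γ : ℕ) (v : Fin n → ℝ) :
    {s : ℝ | ∃ S : Finset (Fin n), S.card = Γ ∧ s = ∑ i ∈ S, v i}.Finite := by
  have : {s : ℝ | ∃ S : Finset (Fin n), S.card = Γ ∧ s = ∑ i ∈ S, v i}
      ⊆ (fun S : Finset (Fin n) => ∑ i ∈ S, v i) '' Set.univ := by
    rintro s ⟨S, _, rfl⟩; exact ⟨S, trivial, rfl⟩
  exact ((Set.finite_univ).image _).subset this

lemma gn_set_ne (n Γ : ℕ) (hΓ : Γ ≤ n) (v : Fin n → ℝ) :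
    {s : ℝ | ∃ S : Finset (Fin n), S.card = Γ ∧ s = ∑ i ∈ S, v i}.Nonempty := by
  obtain ⟨S, -, hS⟩ := Finset.exists_subset_card_eq
    (show Γ ≤ (Finset.univ : Finset (Fin n)).card by simpa using hΓ)
  exact ⟨∑ i ∈ S, v i, S, hS, rfl⟩

lemma le_gammaNorm (n Γ : ℕ) (v : Fin n → ℝ) (S : Finset (Fin n)) (hS : S.card = Γ) :
    ∑ i ∈ S, v i ≤ gammaNorm n Γ v :=
  le_csSup (gn_set_fin n Γ v).bddAbove ⟨S, hS, rfl⟩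

lemma gammaNorm_le (n Γ : ℕ) (hΓ : Γ ≤ n) (v : Fin n → ℝ) (b : ℝ)
    (h : ∀ S : Finset (Fin n), S.card = Γ → ∑ i ∈ S, v i ≤ b) :
    gammaNorm n Γ v ≤ b := by
  refine csSup_le (gn_set_ne n Γ hΓ v) ?_
  rintro s ⟨S, hS, rfl⟩; exact h S hS

lemma hf_set_fin (n Γ : ℕ) (chat d : Fin n → ℝ) (X : Finset (Fin n → ℝ)) (α : ℝ) :
    {w : ℝ | ∃ x ∈ X, ∃ y ∈ X, w = g n Γ chat d x y α}.Finite := by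
  have : {w : ℝ | ∃ x ∈ X, ∃ y ∈ X, w = g n Γ chat d x y α}
      ⊆ (fun p : (Fin n → ℝ) × (Fin n → ℝ) => g n Γ chat d p.1 p.2 α) ''
        ((X : Set (Fin n → ℝ)) ×ˢ (X : Set (Fin n → ℝ))) := by
    rintro w ⟨x, hx, y, hy, rfl⟩; exact ⟨(x, y), ⟨hx, hy⟩, rfl⟩
  exact ((X.finite_toSet.prod X.finite_toSet).image _).subset this

lemma hfun_le (n Γ : ℕ) (chat d : Fin n → ℝ) (X : Finset (Fin n → ℝ)) (α : ℝ)
    {x y : Fin n → ℝ} (hx : x ∈ X) (hy : y ∈ X) :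
    hfun n Γ chat d X α ≤ g n Γ chat d x y α :=
  csInf_le (hf_set_fin n Γ chat d X α).bddBelow ⟨x, hx, y, hy, rfl⟩

lemma le_hfun (n Γ : ℕ) (chat d : Fin n → ℝ) (X : Finset (Fin n → ℝ)) (α : ℝ)
    (hXne : X.Nonempty) (b : ℝ)
    (h : ∀ x ∈ X, ∀ y ∈ X, b ≤ g n Γ chat d x y α) :
    b ≤ hfun n Γ chat d X α := by
  obtain ⟨x0, hx0⟩ := hXne
  refine le_csInf ⟨g n Γ chat d x0 x0 α, x0, hx0, x0, hx0, rfl⟩ ?_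
  rintro w ⟨x, hx, y, hy, rfl⟩; exact h x hx y hy

/-- Key subgradient inequality: `g(x,y,α) ≥ g(x,y,α₁) + (α−α₁)·lowg(x,y)`. -/
lemma g_key (n Γ : ℕ) (hΓ : Γ ≤ n) (chat d : Fin n → ℝ) (hd : ∀ i, 0 ≤ d i)
    (x y : Fin n → ℝ) (hx : ∀ i, x i = 0 ∨ x i = 1)
    (α₁ α : ℝ) (hα : α₁ ≤ α) :
    g n Γ chat d x y α₁ + (α - α₁) * lowg n Γ chat d x y ≤ g n Γ chat d x y α := by
  set G := gammaNorm n Γ (fun i => d i * y i) with hG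
  have key : gammaNorm n Γ (fun i => d i * (α₁ * x i + (1 - α₁) * y i))
      ≤ gammaNorm n Γ (fun i => d i * (α * x i + (1 - α) * y i)) + (α - α₁) * G := by
    refine gammaNorm_le n Γ hΓ _ _ ?_
    intro S hS
    have e : ∑ i ∈ S, d i * (α₁ * x i + (1 - α₁) * y i)
        = ∑ i ∈ S, d i * (α * x i + (1 - α) * y i)
          - (α - α₁) * ∑ i ∈ S, d i * x i + (α - α₁) * ∑ i ∈ S, d i * y i := by
      rw [Finset.mul_sum, Finset.mul_sum, ← Finset.sum_sub_distrib, ← Finset.sum_add_distrib]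
      exact Finset.sum_congr rfl fun i _ => by ring
    have h1 : ∑ i ∈ S, d i * (α * x i + (1 - α) * y i)
        ≤ gammaNorm n Γ (fun i => d i * (α * x i + (1 - α) * y i)) :=
      le_gammaNorm n Γ _ S hS
    have h2 : 0 ≤ ∑ i ∈ S, d i * x i := by
      refine Finset.sum_nonneg fun i _ => mul_nonneg (hd i) ?_
      rcases hx i with h | h <;> simp [h]
    have h3 : ∑ i ∈ S, d i * y i ≤ G := le_gammaNorm n Γ _ S hS
    have h4 : (α - α₁) * ∑ i ∈ S, d i * y i ≤ (α - α₁) * G :=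
      mul_le_mul_of_nonneg_left h3 (by linarith)
    have h5 : 0 ≤ (α - α₁) * ∑ i ∈ S, d i * x i :=
      mul_nonneg (by linarith) h2
    rw [e]; linarith
  simp only [g, lowg, ← hG]
  nlinarith [key]

/-- Lemma 2.1, first inequality. -/
theorem stmt12 (n : ℕ) (hn : 1 ≤ n) (chat d : Fin n → ℝ) (hd : ∀ i, 0 ≤ d i)
    (Γ : ℕ) (hΓ : Γ ≤ n)
    (X : Finset (Fin n → ℝ)) (hXne : X.Nonempty)
    (hX01 : ∀ x ∈ X, ∀ i, x i = 0 ∨ x i = 1)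
    (α₁ α₂ : ℝ) (h0 : 0 ≤ α₁) (h12 : α₁ ≤ α₂) (h2 : α₂ ≤ 1 / 2)
    (x₁ y₁ : Fin n → ℝ) (hx₁ : x₁ ∈ X) (hy₁ : y₁ ∈ X)
    (hmin : ∀ x ∈ X, ∀ y ∈ X,
      g n Γ chat d x₁ y₁ α₁ + (α₂ - α₁) * lowg n Γ chat d x₁ y₁
        ≤ g n Γ chat d x y α₁ + (α₂ - α₁) * lowg n Γ chat d x y) :
    ∀ α ∈ Set.Icc α₁ α₂,
      hfun n Γ chat d X α
        ≥ hfun n Γ chat d X α₁ + (α - α₁) * lowg n Γ chat d x₁ y₁ := by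
  intro α hα
  obtain ⟨hα1, hα2⟩ := hα
  refine le_hfun n Γ chat d X α hXne _ ?_
  intro x hx y hy
  have hkey := g_key n Γ hΓ chat d hd x y (hX01 x hx) α₁ α hα1
  have hA : hfun n Γ chat d X α₁ ≤ g n Γ chat d x y α₁ := hfun_le n Γ chat d X α₁ hx hy
  have hB : hfun n Γ chat d X α₁ ≤ g n Γ chat d x₁ y₁ α₁ := hfun_le n Γ chat d X α₁ hx₁ hy₁
  have hC := hmin x hx y hy
  -- reduce to showing the bound at the base point
  have main : hfun n Γ chat d X α₁ + (α - α₁) * lowg n Γ chat d x₁ y₁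
      ≤ g n Γ chat d x y α₁ + (α - α₁) * lowg n Γ chat d x y := by
    rcases eq_or_lt_of_le h12 with heq | hlt
    · have : α = α₁ := le_antisymm (heq ▸ hα2) hα1
      subst this; simpa using hA
    · nlinarith [hA, hB, hC, hα1, hα2, hlt]
  linarith
end

section
/- (Lemma 3.2, resistance.) Let q ∈ ℕ with q ≥ 1, let UB ∈ ℝ, and let x¹,…,x^k ∈ {0,1}^n. Suppose there exist natural numbers ω₁,…,ω_k with Σ_{j=1}^k ω_j ≤ q·Γ such that for each j ∈ [k], Σ_{i=1}^n ĉ_i x^j_i + sup{ Σ_{i=1}^n d_i x^j_i z_i : z ∈ [0,1]^n, Σ_{i=1}^n z_i ≤ ω_j/q } ≥ UB (i.e., the q-resistance γ^q(x^j) of each x^j is at most ω_j). Then cost(x¹,…,x^k) ≥ UB. -/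
/-- Lemma 3.2, resistance: if deviation budgets `ω_j/q` with
`Σ_j ω_j ≤ q·Γ` suffice to push the cost of each `x^j` up to `UB`, then
`cost(x¹,…,x^k) ≥ UB`. -/
theorem stmt17 (n k : ℕ) (hn : 1 ≤ n) (hk : 1 ≤ k)
    (chat d : Fin n → ℝ) (hd : ∀ i, 0 ≤ d i) (Γ : ℝ) (hΓ : 0 < Γ)
    (q : ℕ) (hq : 1 ≤ q) (UB : ℝ)
    (x : Fin k → Fin n → ℝ) (hx : ∀ j i, x j i = 0 ∨ x j i = 1)
    (ω : Fin k → ℕ) (hω : (∑ j, (ω j : ℝ)) ≤ (q : ℝ) * Γ)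
    (hres : ∀ j, (∑ i, chat i * x j i) +
        sSup {s : ℝ | ∃ z : Fin n → ℝ, (∀ i, 0 ≤ z i ∧ z i ≤ 1) ∧
          (∑ i, z i) ≤ (ω j : ℝ) / (q : ℝ) ∧ s = ∑ i, d i * x j i * z i} ≥ UB) :
    cost n k chat d Γ x ≥ UB := by
  haveI : Nonempty (Fin k) := ⟨⟨0, hk⟩⟩
  have hq0 : (0 : ℝ) < (q : ℝ) := by exact_mod_cast hq
  have hx01 : ∀ j i, 0 ≤ x j i ∧ x j i ≤ 1 := by
    intro j i; rcases hx j i with h | h <;> simp [h]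
  -- the inner sets
  set S : Fin k → Set ℝ := fun j => {s : ℝ | ∃ z : Fin n → ℝ, (∀ i, 0 ≤ z i ∧ z i ≤ 1) ∧
          (∑ i, z i) ≤ (ω j : ℝ) / (q : ℝ) ∧ s = ∑ i, d i * x j i * z i} with hSdef
  have hSne : ∀ j, (S j).Nonempty := by
    intro j
    refine ⟨0, (fun _ => 0), fun i => ⟨le_refl 0, zero_le_one⟩, ?_, by simp⟩
    simp
    positivity
  rw [ge_iff_le]
  refine le_of_forall_pos_le_add fun ε hε => ?_
  have key : ∀ j, ∃ z : Fin n → ℝ, (∀ i, 0 ≤ z i ∧ z i ≤ 1) ∧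
      (∑ i, z i) ≤ (ω j : ℝ) / (q : ℝ) ∧ sSup (S j) - ε < ∑ i, d i * x j i * z i := by
    intro j
    obtain ⟨s, hs, hlt⟩ := exists_lt_of_lt_csSup (hSne j)
      (by linarith : sSup (S j) - ε < sSup (S j))
    obtain ⟨z, hz1, hz2, rfl⟩ := hs
    exact ⟨z, hz1, hz2, hlt⟩
  choose zf hzf1 hzf2 hzf3 using key
  -- the combined deviation vector
  set z : Fin n → ℝ := fun i => Finset.univ.sup' Finset.univ_nonempty (fun j => zf j i * x j i)
    with hzdef
  have hterm01 : ∀ j i, 0 ≤ zf j i * x j i ∧ zf j i * x j i ≤ 1 := by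
    intro j i
    constructor
    · exact mul_nonneg (hzf1 j i).1 (hx01 j i).1
    · calc zf j i * x j i ≤ 1 * 1 :=
            mul_le_mul (hzf1 j i).2 (hx01 j i).2 (hx01 j i).1 zero_le_one
        _ = 1 := by ring
  have hz01 : ∀ i, 0 ≤ z i ∧ z i ≤ 1 := by
    intro i
    constructor
    · exact le_trans (hterm01 (Classical.arbitrary (Fin k)) i).1
        (Finset.le_sup' (fun j => zf j i * x j i) (Finset.mem_univ _))
    · exact Finset.sup'_le _ _ fun j _ => (hterm01 j i).2
  have hzge : ∀ j i, zf j i * x j i ≤ z i := fun j i =>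
    Finset.le_sup' (fun j => zf j i * x j i) (Finset.mem_univ j)
  have hzsum : (∑ i, z i) ≤ Γ := by
    have h1 : ∀ i, z i ≤ ∑ j, zf j i * x j i := by
      intro i
      refine Finset.sup'_le _ _ fun j _ => ?_
      exact Finset.single_le_sum (fun j' _ => (hterm01 j' i).1) (Finset.mem_univ j)
    calc (∑ i, z i) ≤ ∑ i, ∑ j, zf j i * x j i := Finset.sum_le_sum fun i _ => h1 i
      _ = ∑ j, ∑ i, zf j i * x j i := Finset.sum_comm
      _ ≤ ∑ j, (ω j : ℝ) / (q : ℝ) := by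
          refine Finset.sum_le_sum fun j _ => le_trans ?_ (hzf2 j)
          refine Finset.sum_le_sum fun i _ => ?_
          calc zf j i * x j i ≤ zf j i * 1 :=
                mul_le_mul_of_nonneg_left (hx01 j i).2 (hzf1 j i).1
            _ = zf j i := by ring
      _ = (∑ j, (ω j : ℝ)) / (q : ℝ) := by rw [Finset.sum_div]
      _ ≤ Γ := by rw [div_le_iff₀ hq0]; linarith
  set c : Fin n → ℝ := fun i => chat i + d i * z i with hcdef
  have hcmem : c ∈ budgetSet n chat d Γ := ⟨z, hz01, hzsum, fun i => rfl⟩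
  -- bound on each coordinate cost
  have hlow : ∀ j, UB - ε ≤ ∑ i, c i * x j i := by
    intro j
    have hsplit : (∑ i, c i * x j i) =
        (∑ i, chat i * x j i) + ∑ i, d i * z i * x j i := by
      rw [← Finset.sum_add_distrib]
      exact Finset.sum_congr rfl fun i _ => by simp [hcdef]; ring
    have hge : (∑ i, d i * x j i * zf j i) ≤ ∑ i, d i * z i * x j i := by
      refine Finset.sum_le_sum fun i _ => ?_
      rcases hx j i with h | h
      · simp [h]
      · have := hzge j i
        rw [h] at this ⊢
        have hd' := hd i
        nlinarith
    have h3 := hzf3 j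
    have h4 := hres j
    have : (∑ i, d i * x j i * zf j i) = ∑ i, d i * x j i * zf j i := rfl
    -- note the sums in hzf3 are `d i * x j i * zf j i`
    rw [hsplit]
    have h5 : sSup (S j) - ε < ∑ i, d i * x j i * zf j i := h3
    have h6 : UB ≤ (∑ i, chat i * x j i) + sSup (S j) := h4
    linarith
  -- the candidate value
  have hmem : (⨅ j, ∑ i, c i * x j i) ∈
      ((fun c => ⨅ j, ∑ i, c i * x j i) '' budgetSet n chat d Γ) := ⟨c, hcmem, rfl⟩
  have hbdd : BddAbove ((fun c => ⨅ j, ∑ i, c i * x j i) '' budgetSet n chat d Γ) := by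
    refine ⟨∑ i, (chat i + d i) * x ⟨0, hk⟩ i, ?_⟩
    rintro y ⟨c', ⟨z', hz'1, hz'2, hc'⟩, rfl⟩
    have hb : BddBelow (Set.range fun j => ∑ i, c' i * x j i) :=
      (Set.finite_range _).bddBelow
    refine le_trans (ciInf_le hb ⟨0, hk⟩) (Finset.sum_le_sum fun i _ => ?_)
    have : c' i ≤ chat i + d i := by
      rw [hc' i]
      nlinarith [(hz'1 i).2, hd i]
    exact mul_le_mul_of_nonneg_right this (hx01 ⟨0, hk⟩ i).1
  have hlow2 : UB - ε ≤ ⨅ j, ∑ i, c i * x j i := le_ciInf hlow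
  have := le_csSup hbdd hmem
  unfold cost
  linarith
end

section
/- (Validity of the lower bound LB₁.) Let x¹,…,x^k ∈ {0,1}^n. Then cost(x¹,…,x^k) ≥ min_{j∈[k]} lb(x^j), where lb(x) = Σ_{i=1}^n ĉ_i x_i + sup{ Σ_{i=1}^n d_i x_i z_i : z ∈ [0,1]^n, Σ_{i=1}^n z_i ≤ Γ/k } is the cost of x under a scenario assigning a deviation budget of Γ/k to the largest deviations of x. -/
/-- validity of the lower bound `LB₁`:
`cost(x¹,…,x^k) ≥ min_j lb(x^j)` where `lb(x)` assigns a deviation budget of `Γ/k`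
to the largest deviations of `x`. -/
theorem stmt18 (n k : ℕ) (hn : 1 ≤ n) (hk : 1 ≤ k)
    (chat d : Fin n → ℝ) (hd : ∀ i, 0 ≤ d i) (Γ : ℝ) (hΓ : 0 < Γ)
    (x : Fin k → Fin n → ℝ) (hx : ∀ j i, x j i = 0 ∨ x j i = 1) :
    cost n k chat d Γ x ≥
      ⨅ j, ((∑ i, chat i * x j i) +
        sSup {s : ℝ | ∃ z : Fin n → ℝ, (∀ i, 0 ≤ z i ∧ z i ≤ 1) ∧
          (∑ i, z i) ≤ Γ / (k : ℝ) ∧ s = ∑ i, d i * x j i * z i}) := by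
  haveI : Nonempty (Fin k) := ⟨⟨0, hk⟩⟩
  have hkpos : (0:ℝ) < (k:ℝ) := by exact_mod_cast hk
  set S : Fin k → Set ℝ := fun j => {s : ℝ | ∃ z : Fin n → ℝ, (∀ i, 0 ≤ z i ∧ z i ≤ 1) ∧
      (∑ i, z i) ≤ Γ / (k : ℝ) ∧ s = ∑ i, d i * x j i * z i} with hS
  set lb : Fin k → ℝ := fun j => (∑ i, chat i * x j i) + sSup (S j) with hlb
  have hSne : ∀ j, (S j).Nonempty := by
    intro j
    refine ⟨0, 0, fun i => ⟨le_refl 0, zero_le_one⟩, ?_, by simp⟩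
    simp only [Pi.zero_apply, Finset.sum_const_zero]
    exact le_of_lt (div_pos hΓ hkpos)
  have hSbdd : ∀ j, BddAbove (S j) := by
    intro j
    refine ⟨∑ i, d i, fun s hs => ?_⟩
    obtain ⟨z, hz01, _, rfl⟩ := hs
    apply Finset.sum_le_sum
    intro i _
    rcases hx j i with h | h
    · rw [h]; simpa using hd i
    · rw [h, mul_one]
      exact mul_le_of_le_one_right (hd i) (hz01 i).2
  -- bound above the image set
  have hcostBdd : BddAbove ((fun c => ⨅ j, ∑ i, c i * x j i) '' budgetSet n chat d Γ) := by
    refine ⟨∑ i, (|chat i| + d i), ?_⟩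
    rintro v ⟨c, ⟨z, hz01, hzΓ, hc⟩, rfl⟩
    have hbdd : BddBelow (Set.range fun j => ∑ i, c i * x j i) :=
      (Set.finite_range _).bddBelow
    refine le_trans (ciInf_le hbdd ⟨0, hk⟩) ?_
    apply Finset.sum_le_sum
    intro i _
    have hci : c i ≤ |chat i| + d i := by
      rw [hc i]
      have : d i * z i ≤ d i := mul_le_of_le_one_right (hd i) (hz01 i).2
      have := le_abs_self (chat i)
      linarith
    rcases hx ⟨0, hk⟩ i with h | h
    · rw [h, mul_zero]
      have := hd i; have := abs_nonneg (chat i); linarith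
    · simpa [h] using hci
  rw [ge_iff_le]
  apply le_of_forall_pos_le_add
  intro ε hε
  -- choose near-optimal z^j for each j
  have hchoice : ∀ j : Fin k, ∃ z : Fin n → ℝ, (∀ i, 0 ≤ z i ∧ z i ≤ 1) ∧
      (∑ i, z i) ≤ Γ / (k : ℝ) ∧ sSup (S j) - ε < ∑ i, d i * x j i * z i := by
    intro j
    obtain ⟨s, hsS, hslt⟩ := exists_lt_of_lt_csSup (hSne j) (sub_lt_self _ hε)
    obtain ⟨z, hz01, hzb, rfl⟩ := hsS
    exact ⟨z, hz01, hzb, hslt⟩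
  choose zz hz01 hzb hzs using hchoice
  set Z : Fin n → ℝ := fun i => min 1 (∑ j, zz j i) with hZ
  have hZ01 : ∀ i, 0 ≤ Z i ∧ Z i ≤ 1 := by
    intro i
    constructor
    · apply le_min zero_le_one
      exact Finset.sum_nonneg fun j _ => (hz01 j i).1
    · exact min_le_left _ _
  have hZΓ : (∑ i, Z i) ≤ Γ := by
    calc (∑ i, Z i) ≤ ∑ i, ∑ j, zz j i :=
          Finset.sum_le_sum fun i _ => min_le_right _ _
      _ = ∑ j, ∑ i, zz j i := Finset.sum_comm
      _ ≤ ∑ _j : Fin k, Γ / (k:ℝ) := Finset.sum_le_sum fun j _ => hzb j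
      _ = Γ := by
          rw [Finset.sum_const, Finset.card_univ, Fintype.card_fin, nsmul_eq_mul]
          field_simp
  set c : Fin n → ℝ := fun i => chat i + d i * Z i with hc
  have hcU : c ∈ budgetSet n chat d Γ := ⟨Z, hZ01, hZΓ, fun i => rfl⟩
  have hmem : (⨅ j, ∑ i, c i * x j i) ∈
      (fun c => ⨅ j, ∑ i, c i * x j i) '' budgetSet n chat d Γ := ⟨c, hcU, rfl⟩
  have hle : (⨅ j, ∑ i, c i * x j i) ≤ cost n k chat d Γ x := le_csSup hcostBdd hmem
  have hZge : ∀ j i, zz j i ≤ Z i := by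
    intro j i
    apply le_min (hz01 j i).2
    exact Finset.single_le_sum (fun j' _ => (hz01 j' i).1) (Finset.mem_univ j)
  have key : ∀ j, lb j - ε ≤ ∑ i, c i * x j i := by
    intro j
    have hsum : ∑ i, c i * x j i =
        (∑ i, chat i * x j i) + ∑ i, d i * x j i * Z i := by
      rw [← Finset.sum_add_distrib]
      apply Finset.sum_congr rfl
      intro i _
      simp only [hc]; ring
    rw [hsum, hlb]
    dsimp only
    have h1 : sSup (S j) - ε ≤ ∑ i, d i * x j i * Z i := by
      refine le_trans (le_of_lt (hzs j)) (Finset.sum_le_sum ?_)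
      intro i _
      rcases hx j i with h | h
      · simp [h]
      · simp only [h, mul_one]
        exact mul_le_mul_of_nonneg_left (hZge j i) (hd i)
    linarith
  have hfinal : (⨅ j, lb j) - ε ≤ ⨅ j, ∑ i, c i * x j i := by
    apply le_ciInf
    intro j
    have : (⨅ j, lb j) ≤ lb j := ciInf_le (Set.finite_range _).bddBelow j
    linarith [key j]
  calc (⨅ j, lb j) ≤ (⨅ j, ∑ i, c i * x j i) + ε := by linarith
    _ ≤ cost n k chat d Γ x + ε := by linarith
end
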